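/- arXiv:0705.0998 — 6 statements merged into one kernel-verified Lean document; each statement's English description precedes it below -/
import Mathlib

section
/- For every n ≥ 1, the convex hull in ℝ^{n×n} of the n×n alternating sign matrices equals the set P(n) of all real n×n matrices X = (x_{ij}) such that 0 ≤ ∑_{i'=1}^{i} x_{i'j} ≤ 1 for all 1 ≤ i,j ≤ n, 0 ≤ ∑_{j'=1}^{j} x_{ij'} ≤ 1 for all 1 ≤ i,j ≤ n, ∑_{i=1}^{n} x_{ij} = 1 for all j, and ∑_{j=1}^{n} x_{ij} = 1 for all i. -/
open scoped BigOperators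

/-- The nonzero entries of the vector `v` alternate in sign: any two nonzero
entries with only zeros strictly between them have opposite values. -/
def AlternatesSign {n : ℕ} (v : Fin n → ℝ) : Prop :=
  ∀ j₁ j₂ : Fin n, j₁ < j₂ → v j₁ ≠ 0 → v j₂ ≠ 0 →
    (∀ k : Fin n, j₁ < k → k < j₂ → v k = 0) → v j₂ = -v j₁

/-- `A` is an `n × n` alternating sign matrix: entries in `{0, 1, -1}`, each row
and column sums to `1`, and the nonzero entries of each row and column
alternate in sign. -/
def IsASM (n : ℕ) (A : Matrix (Fin n) (Fin n) ℝ) : Prop :=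
  (∀ i j, A i j = 0 ∨ A i j = 1 ∨ A i j = -1) ∧
  (∀ i, ∑ j, A i j = 1) ∧
  (∀ j, ∑ i, A i j = 1) ∧
  (∀ i, AlternatesSign (fun j => A i j)) ∧
  (∀ j, AlternatesSign (fun i => A i j))

/-- The alternating sign matrix polytope: the convex hull of the ASMs. -/
def ASMPolytope (n : ℕ) : Set (Matrix (Fin n) (Fin n) ℝ) :=
  convexHull ℝ {A : Matrix (Fin n) (Fin n) ℝ | IsASM n A}

/-- The inequality description `P(n)`: all real `n × n` matrices whose row and
column partial sums lie in `[0,1]` and whose full row and column sums equal `1`. -/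
def PolySet (n : ℕ) : Set (Matrix (Fin n) (Fin n) ℝ) :=
  {X | (∀ i j : Fin n,
          0 ≤ ∑ i' ∈ Finset.Iic i, X i' j ∧ ∑ i' ∈ Finset.Iic i, X i' j ≤ 1) ∧
       (∀ i j : Fin n,
          0 ≤ ∑ j' ∈ Finset.Iic j, X i j' ∧ ∑ j' ∈ Finset.Iic j, X i j' ≤ 1) ∧
       (∀ j, ∑ i, X i j = 1) ∧
       (∀ i, ∑ j, X i j = 1)}

/-!
The inclusion `⊆` holds because `P(n)` is convex and contains every ASM: a prefix sum of a
sign-alternating vector with entries in `{0, ±1}` is `0` or one of its entries, so the prefix sums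
`S` and the suffix sums `1 - S` of a row or column of an ASM both lie in `[-1, 1]`.

For `⊇`, `P(n)` is compact and convex, so by Krein–Milman it suffices that its extreme points are
ASMs. Encode `X ∈ P(n)` by its corner sums `c a b = ∑_{i < a, j < b} X i j`: the row and column
prefix sums of `X` are the steps of `c` between neighbouring lattice points, and they lie in
`[0, 1]`. If some `c a b` is not an integer, shifting `c` by `±ε` on the whole level set
`{Int.fract c = Int.fract (c a b)}` keeps all steps in `[0, 1]`, because a step between different
levels is not an integer; so `X` is not extreme. Integral corner sums give prefix sums in `{0, 1}`,
and a vector whose prefix sums lie in `{0, 1}` and end at `1` is an ASM row.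
-/

open Finset Matrix Filter Topology

namespace AlternatingSignMatrix

variable {n : ℕ}

def prefixSum (v : Fin n → ℝ) (m : ℕ) : ℝ := ∑ k : Fin n with k.val < m, v k

@[simp]
lemma prefixSum_zero (v : Fin n → ℝ) : prefixSum v 0 = 0 := by
  simp [prefixSum]

lemma prefixSum_succ (v : Fin n → ℝ) {m : ℕ} (hm : m < n) :
    prefixSum v (m + 1) = prefixSum v m + v ⟨m, hm⟩ := by
  have : univ.filter (fun k : Fin n => k.val < m + 1) =
      insert ⟨m, hm⟩ (univ.filter fun k : Fin n => k.val < m) := by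
    ext k
    simp only [mem_filter, mem_univ, true_and, mem_insert, Fin.ext_iff]
    omega
  rw [prefixSum, this, sum_insert (by simp), add_comm, prefixSum]

lemma prefixSum_self (v : Fin n → ℝ) : prefixSum v n = ∑ k, v k := by
  simp [prefixSum]

lemma sum_Iic_eq_prefixSum (v : Fin n → ℝ) (j : Fin n) :
    ∑ k ∈ Iic j, v k = prefixSum v (j + 1) := by
  unfold prefixSum
  congr 1
  ext k
  simp only [mem_Iic, mem_filter, mem_univ, true_and, Fin.le_iff_val_le_val]
  omega

@[simp]
lemma prefixSum_add (v w : Fin n → ℝ) (m : ℕ) :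
    prefixSum (v + w) m = prefixSum v m + prefixSum w m := sum_add_distrib

@[simp]
lemma prefixSum_smul (a : ℝ) (v : Fin n → ℝ) (m : ℕ) :
    prefixSum (a • v) m = a * prefixSum v m := by
  simp [prefixSum, mul_sum]

lemma prefixSum_eq_of_forall_eq_zero {v : Fin n → ℝ} {a b : ℕ} (hab : a ≤ b) (hb : b ≤ n)
    (hv : ∀ k : Fin n, a ≤ k.val → k.val < b → v k = 0) : prefixSum v b = prefixSum v a := by
  induction b, hab using Nat.le_induction with
  | base => rfl
  | succ b hab ih =>
    rw [prefixSum_succ v (by omega), hv ⟨b, by omega⟩ hab (by simp),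
      ih (by omega) fun k hk hkb => hv k hk (by omega), add_zero]

lemma prefixSum_telescope (f : ℕ → ℝ) {m : ℕ} (hm : m ≤ n) :
    prefixSum (n := n) (fun j => f (j + 1) - f j) m = f m - f 0 := by
  induction m with
  | zero => simp
  | succ m ih => rw [prefixSum_succ _ (by omega), ih (by omega)]; ring

lemma prefixSum_comp_rev_add (v : Fin n → ℝ) (m : ℕ) :
    prefixSum (v ∘ Fin.rev) m + prefixSum v (n - m) = ∑ k, v k := by
  have hrev : prefixSum (v ∘ Fin.rev) m = ∑ k : Fin n with ¬ k.val < n - m, v k := by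
    rw [prefixSum, sum_filter, sum_filter]
    refine Fintype.sum_equiv Fin.revPerm _ _ fun k => ?_
    simp only [Function.comp_apply, Fin.revPerm_apply, Fin.val_rev]
    congr 1
    apply propext
    omega
  rw [hrev, add_comm, prefixSum, sum_filter_add_sum_filter_not]

def IsASMVector (v : Fin n → ℝ) : Prop :=
  (∀ k, v k = 0 ∨ v k = 1 ∨ v k = -1) ∧ ∑ k, v k = 1 ∧ AlternatesSign v

def IsRelaxedASMVector (v : Fin n → ℝ) : Prop :=
  (∀ m ≤ n, prefixSum v m ∈ Set.Icc 0 1) ∧ prefixSum v n = 1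

lemma isASM_iff {A : Matrix (Fin n) (Fin n) ℝ} :
    IsASM n A ↔ (∀ i, IsASMVector (A i)) ∧ ∀ j, IsASMVector (Aᵀ j) := by
  simp only [IsASM, IsASMVector, transpose_apply]
  constructor
  · rintro ⟨hval, hrow, hcol, haltr, haltc⟩
    exact ⟨fun i => ⟨hval i, hrow i, haltr i⟩, fun j => ⟨fun i => hval i j, hcol j, haltc j⟩⟩
  · rintro ⟨hr, hc⟩
    exact ⟨fun i => (hr i).1, fun i => (hr i).2.1, fun j => (hc j).2.1, fun i => (hr i).2.2,
      fun j => (hc j).2.2⟩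

lemma isRelaxedASMVector_iff {v : Fin n → ℝ} :
    IsRelaxedASMVector v ↔ (∀ j, ∑ k ∈ Iic j, v k ∈ Set.Icc 0 1) ∧ ∑ k, v k = 1 := by
  rw [IsRelaxedASMVector, prefixSum_self]
  refine and_congr_left' ⟨fun h j => ?_, fun h m hm => ?_⟩
  · rw [sum_Iic_eq_prefixSum]
    exact h _ j.2
  · rcases m with _ | m
    · simp
    · simpa [sum_Iic_eq_prefixSum] using h ⟨m, hm⟩

lemma mem_polySet_iff {X : Matrix (Fin n) (Fin n) ℝ} :
    X ∈ PolySet n ↔ (∀ i, IsRelaxedASMVector (X i)) ∧ ∀ j, IsRelaxedASMVector (Xᵀ j) := by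
  simp only [isRelaxedASMVector_iff, PolySet, Set.mem_Icc, transpose_apply]
  constructor
  · rintro ⟨hcol, hrow, hcolsum, hrowsum⟩
    exact ⟨fun i => ⟨fun j => hrow i j, hrowsum i⟩, fun j => ⟨fun i => hcol i j, hcolsum j⟩⟩
  · rintro ⟨hr, hc⟩
    exact ⟨fun i j => (hc j).1 i, fun i j => (hr i).1 j, fun j => (hc j).2, fun i => (hr i).2⟩

lemma _root_.AlternatesSign.comp_rev {v : Fin n → ℝ} (hv : AlternatesSign v) :
    AlternatesSign (v ∘ Fin.rev) := by
  intro j₁ j₂ hlt h₁ h₂ hzero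
  have := hv (Fin.rev j₂) (Fin.rev j₁) (Fin.rev_lt_rev.mpr hlt) h₂ h₁ fun k hk₁ hk₂ => by
    simpa using hzero (Fin.rev k) (Fin.lt_rev_iff.mp hk₂) (Fin.rev_lt_iff.mp hk₁)
  simp only [Function.comp_apply] at this ⊢
  linarith

lemma _root_.AlternatesSign.prefixSum_eq_zero_or {v : Fin n → ℝ} (hv : AlternatesSign v) :
    ∀ m ≤ n, prefixSum v m = 0 ∨ ∃ p : Fin n, p.val < m ∧
      (∀ k : Fin n, p < k → k.val < m → v k = 0) ∧ prefixSum v m = v p := by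
  intro m hm
  induction m with
  | zero => simp
  | succ m ih =>
    rw [prefixSum_succ v hm]
    set q : Fin n := ⟨m, hm⟩
    rcases ih (by omega) with hzero | ⟨p, hpm, hbetween, hsum⟩
    · exact .inr ⟨q, by simp [q], fun k hqk hk => absurd hqk (by simp [Fin.lt_def, q]; omega),
        by rw [hzero, zero_add]⟩
    by_cases hq : v q = 0
    · refine .inr ⟨p, by omega, fun k hpk hk => ?_, by rw [hsum, hq, add_zero]⟩
      rcases Nat.lt_succ_iff_lt_or_eq.mp hk with hk | hk
      · exact hbetween k hpk hk
      · rwa [show k = q from Fin.ext hk]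
    by_cases hp : v p = 0
    · exact .inr ⟨q, by simp [q], fun k hqk hk => absurd hqk (by simp [Fin.lt_def, q]; omega),
        by rw [hsum, hp, zero_add]⟩
    · left
      rw [hsum, hv p q (by simpa [Fin.lt_def, q] using hpm) hp hq hbetween]
      ring

lemma _root_.AlternatesSign.abs_prefixSum_le_one {v : Fin n → ℝ} (hv : AlternatesSign v)
    (hv₁ : ∀ k, |v k| ≤ 1) {m : ℕ} (hm : m ≤ n) : |prefixSum v m| ≤ 1 := by
  rcases hv.prefixSum_eq_zero_or m hm with h | ⟨p, -, -, h⟩ <;> rw [h]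
  exacts [by simp, hv₁ p]

lemma IsASMVector.isRelaxedASMVector {v : Fin n → ℝ} (hv : IsASMVector v) :
    IsRelaxedASMVector v := by
  obtain ⟨hval, hsum, halt⟩ := hv
  have hv₁ : ∀ k, |v k| ≤ 1 := fun k => by rcases hval k with h | h | h <;> simp [h]
  refine ⟨fun m hm => ?_, by rw [prefixSum_self, hsum]⟩
  have hS := halt.abs_prefixSum_le_one hv₁ hm
  have hT := halt.comp_rev.abs_prefixSum_le_one (fun k => hv₁ _) (Nat.sub_le n m)
  have hST := prefixSum_comp_rev_add v (n - m)
  rw [Nat.sub_sub_self hm, hsum] at hST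
  rw [abs_le] at hS hT
  constructor <;> linarith

lemma isASMVector_of_prefixSum {v : Fin n → ℝ}
    (h01 : ∀ m ≤ n, prefixSum v m = 0 ∨ prefixSum v m = 1) (htot : prefixSum v n = 1) :
    IsASMVector v := by
  have hentry (k : Fin n) : v k = prefixSum v (k + 1) - prefixSum v k := by
    rw [prefixSum_succ v k.2]; ring
  refine ⟨fun k => ?_, by rwa [← prefixSum_self], fun j₁ j₂ hlt h₁ h₂ hzero => ?_⟩
  · rw [hentry]
    rcases h01 (k + 1) k.2 with h | h <;> rcases h01 k k.2.le with h' | h' <;> simp [h, h']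
  · have hmid : prefixSum v j₂ = prefixSum v (j₁ + 1) :=
      prefixSum_eq_of_forall_eq_zero hlt j₂.2.le fun k hk₁ hk₂ => hzero k hk₁ hk₂
    rw [hentry j₁] at h₁ ⊢
    rw [hentry j₂, hmid] at h₂ ⊢
    rcases h01 (j₁ + 1) j₁.2 with ha | ha <;> rcases h01 j₁ j₁.2.le with hb | hb <;>
      rcases h01 (j₂ + 1) j₂.2 with hc | hc <;> simp_all

lemma setOf_isASM_subset_polySet : {A : Matrix (Fin n) (Fin n) ℝ | IsASM n A} ⊆ PolySet n := by
  intro A hA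
  obtain ⟨hrows, hcols⟩ := isASM_iff.mp hA
  exact mem_polySet_iff.mpr
    ⟨fun i => (hrows i).isRelaxedASMVector, fun j => (hcols j).isRelaxedASMVector⟩

def cornerSum (X : Matrix (Fin n) (Fin n) ℝ) (a b : ℕ) : ℝ :=
  prefixSum (fun i => prefixSum (X i) b) a

@[simp]
lemma cornerSum_zero_left (X : Matrix (Fin n) (Fin n) ℝ) (b : ℕ) : cornerSum X 0 b = 0 :=
  prefixSum_zero _

@[simp]
lemma cornerSum_zero_right (X : Matrix (Fin n) (Fin n) ℝ) (a : ℕ) : cornerSum X a 0 = 0 := by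
  simp [cornerSum, prefixSum]

lemma cornerSum_transpose (X : Matrix (Fin n) (Fin n) ℝ) (a b : ℕ) :
    cornerSum Xᵀ a b = cornerSum X b a := by
  simp only [cornerSum, prefixSum, transpose_apply]
  exact sum_comm

lemma cornerSum_succ_sub (X : Matrix (Fin n) (Fin n) ℝ) (i : Fin n) (b : ℕ) :
    cornerSum X (i + 1) b - cornerSum X i b = prefixSum (X i) b := by
  rw [cornerSum, prefixSum_succ _ i.2, cornerSum]
  ring

def mixedDiff (g : ℕ → ℕ → ℝ) : Matrix (Fin n) (Fin n) ℝ :=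
  of fun i j => g (i + 1) (j + 1) - g i (j + 1) - g (i + 1) j + g i j

lemma mixedDiff_transpose (g : ℕ → ℕ → ℝ) :
    (mixedDiff g : Matrix (Fin n) (Fin n) ℝ)ᵀ = mixedDiff fun a b => g b a := by
  ext i j
  simp only [mixedDiff, transpose_apply, of_apply]
  ring

lemma prefixSum_mixedDiff (g : ℕ → ℕ → ℝ) (i : Fin n) {m : ℕ} (hm : m ≤ n) :
    prefixSum (mixedDiff g i) m = g (i + 1) m - g i m - (g (i + 1) 0 - g i 0) := by
  rw [← prefixSum_telescope (fun b => g (i + 1) b - g i b) hm]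
  congr 1
  ext j
  simp only [mixedDiff, of_apply]
  ring

noncomputable def levelIndicator (φ x : ℝ) : ℝ := if Int.fract x = φ then 1 else 0

lemma eventually_sub_add_mul_levelIndicator_mem_Icc {φ x y : ℝ} (h : y - x ∈ Set.Icc 0 1) :
    ∀ᶠ s in 𝓝 (0 : ℝ), y - x + s * (levelIndicator φ y - levelIndicator φ x) ∈ Set.Icc 0 1 := by
  by_cases hfract : Int.fract y = Int.fract x
  · simp [levelIndicator, hfract, h]
  have hne₀ : y - x ≠ 0 := fun h₀ => hfract (by rw [sub_eq_zero.mp h₀])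
  have hne₁ : y - x ≠ 1 := fun h₁ => hfract (by rw [← Int.fract_add_one x]; congr 1; linarith)
  have hcont : Tendsto (fun s : ℝ => y - x + s * (levelIndicator φ y - levelIndicator φ x))
      (𝓝 0) (𝓝 (y - x)) := by
    simpa using tendsto_const_nhds.add ((tendsto_id (x := 𝓝 (0 : ℝ))).mul_const _)
  exact (hcont.eventually (Ioo_mem_nhds (h.1.lt_of_ne' hne₀) (h.2.lt_of_ne hne₁))).mono
    fun s hs => Set.Ioo_subset_Icc_self hs

noncomputable def levelPerturbation (φ : ℝ) (X : Matrix (Fin n) (Fin n) ℝ) :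
    Matrix (Fin n) (Fin n) ℝ :=
  mixedDiff fun a b => levelIndicator φ (cornerSum X a b)

lemma levelPerturbation_transpose (φ : ℝ) (X : Matrix (Fin n) (Fin n) ℝ) :
    (levelPerturbation φ X)ᵀ = levelPerturbation φ Xᵀ := by
  simp only [levelPerturbation, mixedDiff_transpose, cornerSum_transpose]

lemma prefixSum_levelPerturbation (φ : ℝ) (X : Matrix (Fin n) (Fin n) ℝ) (i : Fin n) {m : ℕ}
    (hm : m ≤ n) : prefixSum (levelPerturbation φ X i) m =
      levelIndicator φ (cornerSum X (i + 1) m) - levelIndicator φ (cornerSum X i m) := by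
  simp [levelPerturbation, prefixSum_mixedDiff _ i hm]

lemma eventually_isRelaxedASMVector_add_smul_levelPerturbation (φ : ℝ)
    {X : Matrix (Fin n) (Fin n) ℝ} (hX : ∀ i, IsRelaxedASMVector (X i)) :
    ∀ᶠ s in 𝓝 (0 : ℝ), ∀ i, IsRelaxedASMVector ((X + s • levelPerturbation φ X) i) := by
  refine eventually_all.mpr fun i => ?_
  have hrow (s : ℝ) (m : ℕ) (hm : m ≤ n) : prefixSum ((X + s • levelPerturbation φ X) i) m =
      cornerSum X (i + 1) m - cornerSum X i m + s * (levelIndicator φ (cornerSum X (i + 1) m) -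
        levelIndicator φ (cornerSum X i m)) := by
    rw [← prefixSum_levelPerturbation φ X i hm, cornerSum_succ_sub, ← prefixSum_smul,
      ← prefixSum_add]
    rfl
  have htot : levelIndicator φ (cornerSum X (i + 1) n) = levelIndicator φ (cornerSum X i n) := by
    have := (hX i).2
    rw [← cornerSum_succ_sub, sub_eq_iff_eq_add'] at this
    simp only [this, levelIndicator, Int.fract_add_one]
  have hbounds : ∀ᶠ s in 𝓝 (0 : ℝ), ∀ m ∈ Set.Iic n,
      prefixSum ((X + s • levelPerturbation φ X) i) m ∈ Set.Icc 0 1 := by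
    refine (Set.finite_Iic n).eventually_all.mpr fun m hm => ?_
    have hXm := (hX i).1 m hm
    rw [← cornerSum_succ_sub] at hXm
    filter_upwards [eventually_sub_add_mul_levelIndicator_mem_Icc (φ := φ) hXm] with s hs
    rwa [hrow s m hm]
  filter_upwards [hbounds] with s hs
  refine ⟨hs, ?_⟩
  rw [hrow s n le_rfl, htot, sub_self, mul_zero, add_zero, cornerSum_succ_sub]
  exact (hX i).2

lemma eventually_add_smul_levelPerturbation_mem_polySet (φ : ℝ) {X : Matrix (Fin n) (Fin n) ℝ}
    (hX : X ∈ PolySet n) : ∀ᶠ s in 𝓝 (0 : ℝ), X + s • levelPerturbation φ X ∈ PolySet n := by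
  rw [mem_polySet_iff] at hX
  filter_upwards [eventually_isRelaxedASMVector_add_smul_levelPerturbation φ hX.1,
    eventually_isRelaxedASMVector_add_smul_levelPerturbation φ hX.2] with s hrows hcols
  rw [mem_polySet_iff, transpose_add, transpose_smul, levelPerturbation_transpose]
  exact ⟨hrows, hcols⟩

lemma levelPerturbation_ne_zero {φ : ℝ} (hφ : φ ≠ 0) {X : Matrix (Fin n) (Fin n) ℝ} {a b : ℕ}
    (ha : a ≤ n) (hb : b ≤ n) (hab : Int.fract (cornerSum X a b) = φ) :
    levelPerturbation φ X ≠ 0 := by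
  intro hzero
  have hstep (a : ℕ) (ha : a < n) :
      levelIndicator φ (cornerSum X (a + 1) b) = levelIndicator φ (cornerSum X a b) := by
    have := prefixSum_levelPerturbation φ X ⟨a, ha⟩ hb
    rw [hzero] at this
    simp only [prefixSum, Matrix.zero_apply, sum_const_zero] at this
    linarith
  have hlevel (a : ℕ) (ha : a ≤ n) : levelIndicator φ (cornerSum X a b) = 0 := by
    induction a with
    | zero => simp [levelIndicator, hφ.symm]
    | succ a ih => rw [hstep a ha, ih (by omega)]
  simpa [levelIndicator, hab] using hlevel a ha

lemma notMem_extremePoints_of_eventually_add_smul_mem {E : Type*} [AddCommGroup E] [Module ℝ E]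
    {A : Set E} {x v : E} (hv : v ≠ 0) (h : ∀ᶠ s in 𝓝 (0 : ℝ), x + s • v ∈ A) :
    x ∉ A.extremePoints ℝ := by
  obtain ⟨ε, hε, hball⟩ := Metric.eventually_nhds_iff.mp h
  have hplus : x + (ε / 2) • v ∈ A := hball (by simp [abs_of_pos hε]; linarith)
  have hminus : x - (ε / 2) • v ∈ A := by
    simpa [sub_eq_add_neg] using hball (y := -(ε / 2)) (by simp [abs_of_pos hε]; linarith)
  intro hx
  have := hx.2 hplus hminus (mem_openSegment_add_sub x _)
  rw [add_eq_left, smul_eq_zero] at this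
  exact this.elim (by positivity) hv

lemma isASMVector_of_fract_cornerSum_eq_zero {X : Matrix (Fin n) (Fin n) ℝ} (i : Fin n)
    (hX : IsRelaxedASMVector (X i))
    (hc : ∀ a ≤ n, ∀ b ≤ n, Int.fract (cornerSum X a b) = 0) : IsASMVector (X i) := by
  refine isASMVector_of_prefixSum (fun m hm => ?_) hX.2
  obtain ⟨z, hz⟩ := Int.fract_eq_fract.mp ((hc (i + 1) i.2 m hm).trans (hc i i.2.le m hm).symm)
  obtain ⟨h₀, h₁⟩ := hX.1 m hm
  rw [cornerSum_succ_sub] at hz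
  rw [hz] at h₀ h₁ ⊢
  have : z = 0 ∨ z = 1 := by
    have : (0 : ℤ) ≤ z ∧ z ≤ 1 := ⟨by exact_mod_cast h₀, by exact_mod_cast h₁⟩
    omega
  rcases this with rfl | rfl <;> simp

lemma isASM_of_fract_cornerSum_eq_zero {X : Matrix (Fin n) (Fin n) ℝ} (hX : X ∈ PolySet n)
    (hc : ∀ a ≤ n, ∀ b ≤ n, Int.fract (cornerSum X a b) = 0) : IsASM n X := by
  rw [mem_polySet_iff] at hX
  refine isASM_iff.mpr ⟨fun i => isASMVector_of_fract_cornerSum_eq_zero i (hX.1 i) hc,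
    fun j => isASMVector_of_fract_cornerSum_eq_zero j (hX.2 j) fun a ha b hb => ?_⟩
  rw [cornerSum_transpose]
  exact hc b hb a ha

lemma isASM_of_mem_extremePoints {X : Matrix (Fin n) (Fin n) ℝ}
    (hX : X ∈ (PolySet n).extremePoints ℝ) : IsASM n X := by
  refine isASM_of_fract_cornerSum_eq_zero hX.1 ?_
  by_contra! ⟨a, ha, b, hb, hfract⟩
  exact notMem_extremePoints_of_eventually_add_smul_mem
    (levelPerturbation_ne_zero hfract ha hb rfl)
    (eventually_add_smul_levelPerturbation_mem_polySet _ hX.1) hX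

lemma finite_setOf_isASM : {A : Matrix (Fin n) (Fin n) ℝ | IsASM n A}.Finite := by
  refine (Set.Finite.pi fun _ => Set.Finite.pi fun _ => (Set.toFinite {0, 1, -1})).subset ?_
  intro A hA i _ j _
  simpa using hA.1 i j

lemma convex_setOf_isRelaxedASMVector : Convex ℝ {v : Fin n → ℝ | IsRelaxedASMVector v} := by
  intro v hv w hw a b ha hb hab
  refine ⟨fun m hm => ?_, by simp [hv.2, hw.2, hab]⟩
  simpa using convex_Icc (0 : ℝ) 1 (hv.1 m hm) (hw.1 m hm) ha hb hab

lemma isClosed_setOf_isRelaxedASMVector : IsClosed {v : Fin n → ℝ | IsRelaxedASMVector v} := by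
  have hcont (m : ℕ) : Continuous fun v : Fin n → ℝ => prefixSum v m := by
    unfold prefixSum; fun_prop
  simp only [IsRelaxedASMVector, Set.ofPred_and, Set.ofPred_forall]
  exact (isClosed_iInter fun m => isClosed_iInter fun _ => isClosed_Icc.preimage (hcont m)).inter
    (isClosed_eq (hcont n) continuous_const)

lemma convex_polySet : Convex ℝ (PolySet n) := by
  intro X hX Y hY a b ha hb hab
  rw [mem_polySet_iff] at hX hY ⊢
  rw [transpose_add, transpose_smul, transpose_smul]
  exact ⟨fun i => convex_setOf_isRelaxedASMVector (hX.1 i) (hY.1 i) ha hb hab,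
    fun j => convex_setOf_isRelaxedASMVector (hX.2 j) (hY.2 j) ha hb hab⟩

lemma isClosed_polySet : IsClosed (PolySet n) := by
  have : PolySet n = (⋂ i, (fun X : Matrix (Fin n) (Fin n) ℝ => X i) ⁻¹'
      {v | IsRelaxedASMVector v}) ∩ ⋂ j, (fun X => Xᵀ j) ⁻¹' {v | IsRelaxedASMVector v} := by
    ext X
    simp [mem_polySet_iff]
  rw [this]
  exact (isClosed_iInter fun i => isClosed_setOf_isRelaxedASMVector.preimage (by fun_prop)).inter
    (isClosed_iInter fun j => isClosed_setOf_isRelaxedASMVector.preimage (by fun_prop))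

lemma IsRelaxedASMVector.mem_Icc {v : Fin n → ℝ} (hv : IsRelaxedASMVector v) (k : Fin n) :
    v k ∈ Set.Icc (-1) 1 := by
  have := prefixSum_succ v k.2
  have h₁ := hv.1 (k + 1) k.2
  have h₀ := hv.1 k k.2.le
  constructor <;> linarith [h₀.1, h₀.2, h₁.1, h₁.2]

lemma isCompact_polySet : IsCompact (PolySet n) := by
  refine (isCompact_univ_pi fun _ => isCompact_univ_pi fun _ => isCompact_Icc).of_isClosed_subset
    isClosed_polySet fun X hX i _ j _ => ((mem_polySet_iff.mp hX).1 i).mem_Icc j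

instance {l m : Type*} : LocallyConvexSpace ℝ (Matrix l m ℝ) :=
  inferInstanceAs (LocallyConvexSpace ℝ (l → m → ℝ))

end AlternatingSignMatrix

open AlternatingSignMatrix

theorem asmPolytope_eq_polySet_general (n : ℕ) :
    convexHull ℝ {A : Matrix (Fin n) (Fin n) ℝ | IsASM n A} = PolySet n := by
  refine (convexHull_min setOf_isASM_subset_polySet convex_polySet).antisymm ?_
  calc PolySet n = closure (convexHull ℝ ((PolySet n).extremePoints ℝ)) :=
        (closure_convexHull_extremePoints isCompact_polySet convex_polySet).symm
    _ ⊆ closure (convexHull ℝ {A | IsASM n A}) :=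
        closure_mono (convexHull_mono fun _ => isASM_of_mem_extremePoints)
    _ = convexHull ℝ {A | IsASM n A} := (finite_setOf_isASM.isClosed_convexHull ℝ).closure_eq

/-- The convex hull of the `n × n` alternating sign matrices equals `P(n)`. -/
theorem asmPolytope_eq_polySet (n : ℕ) (hn : 1 ≤ n) :
    convexHull ℝ {A : Matrix (Fin n) (Fin n) ℝ | IsASM n A} = PolySet n :=
  asmPolytope_eq_polySet_general n
end

section
/- Let X ∈ P(n) and suppose some row or column partial sum of X is strictly between 0 and 1 (so X is not an alternating sign matrix). Then there exist matrices X', X'' ∈ P(n) and λ ∈ (0,1) with X = λX' + (1−λ)X'', such that the set of pairs (position, direction) at which the partial sum of X lies in {0,1} is strictly contained in the corresponding set for X' and also strictly contained in the corresponding set for X''. -/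
open scoped BigOperators

/-- The partial sum of `X` at position `p.1 = (i, j)` in direction `p.2`:
`true` means the column partial sum `∑_{i' ≤ i} x_{i'j}` (from the top),
`false` means the row partial sum `∑_{j' ≤ j} x_{ij'}` (from the left). -/
def partialSum {n : ℕ} (X : Matrix (Fin n) (Fin n) ℝ)
    (p : (Fin n × Fin n) × Bool) : ℝ :=
  if p.2 then ∑ i' ∈ Finset.Iic p.1.1, X i' p.1.2
  else ∑ j' ∈ Finset.Iic p.1.2, X p.1.1 j'

/-- The set of (position, direction) pairs whose partial sum is non-inner,
i.e. lies in `{0, 1}`. -/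
def nonInnerSet {n : ℕ} (X : Matrix (Fin n) (Fin n) ℝ) :
    Set ((Fin n × Fin n) × Bool) :=
  {p | partialSum X p = 0 ∨ partialSum X p = 1}

section Aux

lemma sum_Iic_fin {n : ℕ} {M : Type*} [AddCommMonoid M] (f : ℕ → M) (i : Fin n) :
    ∑ k ∈ Finset.Iic i, f (k : ℕ) = ∑ k ∈ Finset.range (i + 1), f k := by
  have : Finset.range (i + 1) = (Finset.Iic i).map Fin.valEmbedding := by
    rw [Fin.map_valEmbedding_Iic]; ext k; simp [Nat.lt_succ_iff]
  rw [this, Finset.sum_map]; rfl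

variable (n : ℕ) (X : Matrix (Fin n) (Fin n) ℝ)

/-- Extension of `X` to ℕ-indices. -/
def auxXe (i j : ℕ) : ℝ :=
  if h : i < n ∧ j < n then X ⟨i, h.1⟩ ⟨j, h.2⟩ else 0

/-- Corner sums. -/
def auxH (a b : ℕ) : ℝ := ∑ k ∈ Finset.range a, ∑ l ∈ Finset.range b, auxXe n X k l

lemma auxH_comm (a b : ℕ) :
    auxH n X a b = ∑ l ∈ Finset.range b, ∑ k ∈ Finset.range a, auxXe n X k l :=
  Finset.sum_comm

lemma auxXe_eq (i j : Fin n) : auxXe n X ↑i ↑j = X i j := by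
  unfold auxXe; rw [dif_pos ⟨i.isLt, j.isLt⟩]

lemma auxH_col (i j : Fin n) :
    ∑ i' ∈ Finset.Iic i, X i' j = auxH n X (i + 1) (j + 1) - auxH n X (i + 1) j := by
  calc ∑ i' ∈ Finset.Iic i, X i' j
      = ∑ i' ∈ Finset.Iic i, auxXe n X ↑i' ↑j :=
        Finset.sum_congr rfl fun k _ => (auxXe_eq n X k j).symm
    _ = ∑ k ∈ Finset.range (i + 1), auxXe n X k ↑j := sum_Iic_fin (fun k => auxXe n X k ↑j) i
    _ = auxH n X (i + 1) (j + 1) - auxH n X (i + 1) j := by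
        unfold auxH
        rw [← Finset.sum_sub_distrib]
        refine Finset.sum_congr rfl fun k _ => ?_
        rw [Finset.sum_range_succ]; ring

lemma auxH_row (i j : Fin n) :
    ∑ j' ∈ Finset.Iic j, X i j' = auxH n X (i + 1) (j + 1) - auxH n X ↑i (j + 1) := by
  calc ∑ j' ∈ Finset.Iic j, X i j'
      = ∑ j' ∈ Finset.Iic j, auxXe n X ↑i ↑j' :=
        Finset.sum_congr rfl fun k _ => (auxXe_eq n X i k).symm
    _ = ∑ l ∈ Finset.range (j + 1), auxXe n X ↑i l := sum_Iic_fin (fun l => auxXe n X ↑i l) j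
    _ = auxH n X (i + 1) (j + 1) - auxH n X ↑i (j + 1) := by
        rw [auxH_comm, auxH_comm]
        rw [← Finset.sum_sub_distrib]
        refine Finset.sum_congr rfl fun l _ => ?_
        rw [Finset.sum_range_succ]; ring

lemma auxH_top (hc : ∀ j, ∑ i, X i j = 1) {b : ℕ} (hb : b ≤ n) :
    auxH n X n b = b := by
  rw [auxH_comm]
  have h1 : ∀ l ∈ Finset.range b, ∑ k ∈ Finset.range n, auxXe n X k l = 1 := by
    intro l hl
    have hln : l < n := lt_of_lt_of_le (Finset.mem_range.mp hl) hb
    rw [← Fin.sum_univ_eq_sum_range (fun k => auxXe n X k l) n]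
    rw [← hc ⟨l, hln⟩]
    exact Finset.sum_congr rfl fun k _ => auxXe_eq n X k ⟨l, hln⟩
  rw [Finset.sum_congr rfl h1]
  simp

lemma auxH_right (hr : ∀ i, ∑ j, X i j = 1) {a : ℕ} (ha : a ≤ n) :
    auxH n X a n = a := by
  unfold auxH
  have h1 : ∀ k ∈ Finset.range a, ∑ l ∈ Finset.range n, auxXe n X k l = 1 := by
    intro k hk
    have hkn : k < n := lt_of_lt_of_le (Finset.mem_range.mp hk) ha
    rw [← Fin.sum_univ_eq_sum_range (fun l => auxXe n X k l) n]
    rw [← hr ⟨k, hkn⟩]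
    exact Finset.sum_congr rfl fun l _ => auxXe_eq n X ⟨k, hkn⟩ l
  rw [Finset.sum_congr rfl h1]
  simp

variable (c : ℝ)

/-- Vertex perturbation. -/
noncomputable def auxE (i j : ℕ) : ℝ := if Int.fract (auxH n X i j) = c then 1 else 0

/-- Perturbation direction matrix. -/
noncomputable def auxD : Matrix (Fin n) (Fin n) ℝ := fun i j =>
  auxE n X c (i + 1) (j + 1) - auxE n X c ↑i (j + 1)
    - auxE n X c (i + 1) ↑j + auxE n X c ↑i ↑j

lemma auxE_int (hc0 : c ≠ 0) {i j : ℕ} (hz : ∃ z : ℤ, auxH n X i j = z) :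
    auxE n X c i j = 0 := by
  obtain ⟨z, hz⟩ := hz
  unfold auxE
  rw [hz, Int.fract_intCast, if_neg (Ne.symm hc0)]

lemma auxE_0b (hc0 : c ≠ 0) (b : ℕ) : auxE n X c 0 b = 0 :=
  auxE_int n X c hc0 ⟨0, by unfold auxH; simp⟩

lemma auxE_b0 (hc0 : c ≠ 0) (b : ℕ) : auxE n X c b 0 = 0 :=
  auxE_int n X c hc0 ⟨0, by unfold auxH; simp⟩

lemma auxE_nb (hc0 : c ≠ 0) (hc : ∀ j, ∑ i, X i j = 1) {b : ℕ} (hb : b ≤ n) :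
    auxE n X c n b = 0 :=
  auxE_int n X c hc0 ⟨(b : ℤ), by rw [auxH_top n X hc hb]; norm_num⟩

lemma auxE_an (hc0 : c ≠ 0) (hr : ∀ i, ∑ j, X i j = 1) {a : ℕ} (ha : a ≤ n) :
    auxE n X c a n = 0 :=
  auxE_int n X c hc0 ⟨(a : ℤ), by rw [auxH_right n X hr ha]; norm_num⟩

lemma auxD_col (hc0 : c ≠ 0) (i j : Fin n) :
    ∑ i' ∈ Finset.Iic i, auxD n X c i' j
      = auxE n X c (i + 1) (j + 1) - auxE n X c (i + 1) ↑j := by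
  set g : ℕ → ℝ := fun k => auxE n X c k (j + 1) - auxE n X c k ↑j with hg
  have e1 : ∀ i' : Fin n, auxD n X c i' j = (fun k => g (k + 1) - g k) ↑i' := by
    intro i'; simp only [auxD, hg]; ring
  calc ∑ i' ∈ Finset.Iic i, auxD n X c i' j
      = ∑ i' ∈ Finset.Iic i, (fun k => g (k + 1) - g k) ↑i' :=
        Finset.sum_congr rfl fun k _ => e1 k
    _ = ∑ k ∈ Finset.range (i + 1), (g (k + 1) - g k) := sum_Iic_fin (fun k => g (k + 1) - g k) i
    _ = g (↑i + 1) - g 0 := Finset.sum_range_sub g (i + 1)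
    _ = auxE n X c (i + 1) (j + 1) - auxE n X c (i + 1) ↑j := by
        simp only [hg, auxE_0b n X c hc0]; ring

lemma auxD_row (hc0 : c ≠ 0) (i j : Fin n) :
    ∑ j' ∈ Finset.Iic j, auxD n X c i j'
      = auxE n X c (i + 1) (j + 1) - auxE n X c ↑i (j + 1) := by
  set g : ℕ → ℝ := fun l => auxE n X c (i + 1) l - auxE n X c ↑i l with hg
  have e1 : ∀ j' : Fin n, auxD n X c i j' = (fun l => g (l + 1) - g l) ↑j' := by
    intro j'; simp only [auxD, hg]; ring
  calc ∑ j' ∈ Finset.Iic j, auxD n X c i j'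
      = ∑ j' ∈ Finset.Iic j, (fun l => g (l + 1) - g l) ↑j' :=
        Finset.sum_congr rfl fun k _ => e1 k
    _ = ∑ l ∈ Finset.range (j + 1), (g (l + 1) - g l) := sum_Iic_fin (fun l => g (l + 1) - g l) j
    _ = g (↑j + 1) - g 0 := Finset.sum_range_sub g (j + 1)
    _ = auxE n X c (i + 1) (j + 1) - auxE n X c ↑i (j + 1) := by
        simp only [hg, auxE_b0 n X c hc0]; ring

lemma auxD_colsum (hc0 : c ≠ 0) (hc : ∀ j, ∑ i, X i j = 1) (j : Fin n) :
    ∑ i, auxD n X c i j = 0 := by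
  set g : ℕ → ℝ := fun k => auxE n X c k (j + 1) - auxE n X c k ↑j with hg
  have e1 : ∀ i' : Fin n, auxD n X c i' j = (fun k => g (k + 1) - g k) ↑i' := by
    intro i'; simp only [auxD, hg]; ring
  rw [Finset.sum_congr rfl fun k _ => e1 k]
  rw [Fin.sum_univ_eq_sum_range (fun k => g (k + 1) - g k) n]
  rw [Finset.sum_range_sub g n]
  have h1 : g n = 0 := by
    simp only [hg, auxE_nb n X c hc0 hc (Nat.succ_le_of_lt j.isLt),
      auxE_nb n X c hc0 hc (le_of_lt j.isLt)]
    ring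
  have h2 : g 0 = 0 := by simp only [hg, auxE_0b n X c hc0]; ring
  rw [h1, h2]; ring

lemma auxD_rowsum (hc0 : c ≠ 0) (hr : ∀ i, ∑ j, X i j = 1) (i : Fin n) :
    ∑ j, auxD n X c i j = 0 := by
  set g : ℕ → ℝ := fun l => auxE n X c (i + 1) l - auxE n X c ↑i l with hg
  have e1 : ∀ j' : Fin n, auxD n X c i j' = (fun l => g (l + 1) - g l) ↑j' := by
    intro j'; simp only [auxD, hg]; ring
  rw [Finset.sum_congr rfl fun k _ => e1 k]
  rw [Fin.sum_univ_eq_sum_range (fun l => g (l + 1) - g l) n]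
  rw [Finset.sum_range_sub g n]
  have h1 : g n = 0 := by
    simp only [hg, auxE_an n X c hc0 hr (Nat.succ_le_of_lt i.isLt),
      auxE_an n X c hc0 hr (le_of_lt i.isLt)]
    ring
  have h2 : g 0 = 0 := by simp only [hg, auxE_b0 n X c hc0]; ring
  rw [h1, h2]; ring

end Aux


section Main

variable {n : ℕ}

/-- Tail index of the edge `p`. -/
def auxTl (p : (Fin n × Fin n) × Bool) : ℕ × ℕ :=
  if p.2 then (p.1.1 + 1, p.1.2) else (p.1.1, p.1.2 + 1)

lemma partialSum_H (X : Matrix (Fin n) (Fin n) ℝ) (p : (Fin n × Fin n) × Bool) :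
    partialSum X p = auxH n X (p.1.1 + 1) (p.1.2 + 1) - auxH n X (auxTl p).1 (auxTl p).2 := by
  obtain ⟨⟨i, j⟩, b⟩ := p
  cases b
  · simpa [partialSum, auxTl] using auxH_row n X i j
  · simpa [partialSum, auxTl] using auxH_col n X i j

lemma partialSum_D (X : Matrix (Fin n) (Fin n) ℝ) {c : ℝ} (hc0 : c ≠ 0)
    (p : (Fin n × Fin n) × Bool) :
    partialSum (auxD n X c) p
      = auxE n X c (p.1.1 + 1) (p.1.2 + 1) - auxE n X c (auxTl p).1 (auxTl p).2 := by
  obtain ⟨⟨i, j⟩, b⟩ := p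
  cases b
  · simpa [partialSum, auxTl] using auxD_row n X c hc0 i j
  · simpa [partialSum, auxTl] using auxD_col n X c hc0 i j

lemma auxD_zero_of_int (X : Matrix (Fin n) (Fin n) ℝ) {c : ℝ} (hc0 : c ≠ 0)
    (p : (Fin n × Fin n) × Bool) (hz : ∃ z : ℤ, partialSum X p = z) :
    partialSum (auxD n X c) p = 0 := by
  obtain ⟨z, hz⟩ := hz
  rw [partialSum_H X p] at hz
  have hfr : Int.fract (auxH n X (p.1.1 + 1) (p.1.2 + 1))
      = Int.fract (auxH n X (auxTl p).1 (auxTl p).2) :=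
    Int.fract_eq_fract.mpr ⟨z, hz⟩
  rw [partialSum_D X hc0 p]
  unfold auxE
  rw [hfr]
  ring

lemma partialSum_add_smul (X D : Matrix (Fin n) (Fin n) ℝ) (t : ℝ)
    (p : (Fin n × Fin n) × Bool) :
    partialSum (X + t • D) p = partialSum X p + t * partialSum D p := by
  obtain ⟨⟨i, j⟩, b⟩ := p
  cases b <;>
    simp [partialSum, Matrix.add_apply, Matrix.smul_apply, smul_eq_mul,
      Finset.sum_add_distrib, Finset.mul_sum]

lemma partialSum_neg (D : Matrix (Fin n) (Fin n) ℝ) (p : (Fin n × Fin n) × Bool) :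
    partialSum (-D) p = -partialSum D p := by
  obtain ⟨⟨i, j⟩, b⟩ := p
  cases b <;> simp [partialSum, Matrix.neg_apply, Finset.sum_neg_distrib]

lemma partialSum_bounds (X : Matrix (Fin n) (Fin n) ℝ) (hX : X ∈ PolySet n)
    (p : (Fin n × Fin n) × Bool) :
    0 ≤ partialSum X p ∧ partialSum X p ≤ 1 := by
  obtain ⟨⟨i, j⟩, b⟩ := p
  cases b
  · simpa [partialSum] using hX.2.1 i j
  · simpa [partialSum] using hX.1 i j

/-- Key step: move from `X` in the direction `D` until a new partial sum hits
the boundary. -/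
lemma step_lemma (X : Matrix (Fin n) (Fin n) ℝ) (hX : X ∈ PolySet n)
    (D : Matrix (Fin n) (Fin n) ℝ)
    (h1 : ∀ p, (partialSum X p = 0 ∨ partialSum X p = 1) → partialSum D p = 0)
    (h2 : ∀ j, ∑ i, D i j = 0) (h3 : ∀ i, ∑ j, D i j = 0)
    (h4 : ∃ p, partialSum D p ≠ 0) :
    ∃ t : ℝ, 0 < t ∧ X + t • D ∈ PolySet n ∧
      nonInnerSet X ⊂ nonInnerSet (X + t • D) := by
  classical
  have hb := partialSum_bounds X hX
  have hStrict : ∀ p, partialSum D p ≠ 0 →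
      0 < partialSum X p ∧ partialSum X p < 1 := by
    intro p hp
    rcases (hb p) with ⟨h0, h1'⟩
    constructor
    · rcases lt_or_eq_of_le h0 with h | h
      · exact h
      · exact absurd (h1 p (Or.inl h.symm)) hp
    · rcases lt_or_eq_of_le h1' with h | h
      · exact h
      · exact absurd (h1 p (Or.inr h)) hp
  set S : Finset ((Fin n × Fin n) × Bool) :=
    Finset.univ.filter (fun p => partialSum D p ≠ 0) with hS
  obtain ⟨p0, hp0⟩ := h4
  have hSne : S.Nonempty := ⟨p0, by simp [hS, hp0]⟩
  set cf : ((Fin n × Fin n) × Bool) → ℝ := fun p =>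
    if 0 < partialSum D p then (1 - partialSum X p) / partialSum D p
    else partialSum X p / (-(partialSum D p)) with hcf
  have hcfpos : ∀ p ∈ S, 0 < cf p := by
    intro p hp
    have hpD : partialSum D p ≠ 0 := by simpa [hS] using hp
    obtain ⟨hs0, hs1⟩ := hStrict p hpD
    by_cases hD : 0 < partialSum D p
    · rw [hcf]; simp only [if_pos hD]
      exact div_pos (by linarith) hD
    · have hDlt : partialSum D p < 0 := lt_of_le_of_ne (not_lt.mp hD) hpD
      rw [hcf]; simp only [if_neg hD]
      exact div_pos hs0 (by linarith)
  obtain ⟨q, hq, hqmin⟩ := S.exists_min_image cf hSne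
  have hqD : partialSum D q ≠ 0 := by simpa [hS] using hq
  obtain ⟨hqs0, hqs1⟩ := hStrict q hqD
  refine ⟨cf q, hcfpos q hq, ?_, ?_⟩
  · -- membership in PolySet
    have hbnd : ∀ p, 0 ≤ partialSum (X + cf q • D) p ∧
        partialSum (X + cf q • D) p ≤ 1 := by
      intro p
      rw [partialSum_add_smul]
      by_cases hD : partialSum D p = 0
      · simpa [hD] using hb p
      · have hpS : p ∈ S := by simp [hS, hD]
        obtain ⟨hs0, hs1⟩ := hStrict p hD
        have hle := hqmin p hpS
        have htpos := hcfpos q hq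
        by_cases hDp : 0 < partialSum D p
        · have h5 : cf p = (1 - partialSum X p) / partialSum D p := by
            rw [hcf]; simp only [if_pos hDp]
          have h6 : cf q * partialSum D p ≤ 1 - partialSum X p := by
            have := mul_le_mul_of_nonneg_right hle (le_of_lt hDp)
            rwa [h5, div_mul_cancel₀ _ (ne_of_gt hDp)] at this
          constructor
          · nlinarith
          · linarith
        · have hDlt : partialSum D p < 0 := lt_of_le_of_ne (not_lt.mp hDp) hD
          have h5 : cf p = partialSum X p / (-(partialSum D p)) := by
            rw [hcf]; simp only [if_neg hDp]
          have h6 : cf q * (-(partialSum D p)) ≤ partialSum X p := by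
            have := mul_le_mul_of_nonneg_right hle (by linarith :
              (0:ℝ) ≤ -(partialSum D p))
            rwa [h5, div_mul_cancel₀ _ (by linarith : -(partialSum D p) ≠ 0)] at this
          constructor
          · linarith
          · nlinarith
    refine ⟨fun i j => ?_, fun i j => ?_, fun j => ?_, fun i => ?_⟩
    · simpa [partialSum] using hbnd ((i, j), true)
    · simpa [partialSum] using hbnd ((i, j), false)
    · have := hX.2.2.1 j
      simp [Matrix.add_apply, Matrix.smul_apply, smul_eq_mul,
        Finset.sum_add_distrib, ← Finset.mul_sum, h2 j, this]
    · have := hX.2.2.2 i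
      simp [Matrix.add_apply, Matrix.smul_apply, smul_eq_mul,
        Finset.sum_add_distrib, ← Finset.mul_sum, h3 i, this]
  · -- strict inclusion of nonInnerSet
    have hsub : nonInnerSet X ⊆ nonInnerSet (X + cf q • D) := by
      intro p hp
      have hD0 : partialSum D p = 0 := h1 p hp
      unfold nonInnerSet at hp ⊢
      rwa [Set.mem_setOf_eq, partialSum_add_smul, hD0, mul_zero, add_zero]
    rw [Set.ssubset_iff_of_subset hsub]
    refine ⟨q, ?_, ?_⟩
    · unfold nonInnerSet
      rw [Set.mem_setOf_eq, partialSum_add_smul]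
      by_cases hDp : 0 < partialSum D q
      · right
        have : cf q = (1 - partialSum X q) / partialSum D q := by
          rw [hcf]; simp only [if_pos hDp]
        rw [this, div_mul_cancel₀ _ (ne_of_gt hDp)]; ring
      · left
        have hDlt : partialSum D q < 0 := lt_of_le_of_ne (not_lt.mp hDp) hqD
        have h7 : cf q = partialSum X q / (-(partialSum D q)) := by
          rw [hcf]; simp only [if_neg hDp]
        have h8 : partialSum X q / (-(partialSum D q)) * partialSum D q
            = -partialSum X q := by
          rw [div_mul_eq_mul_div, mul_div_assoc, div_neg, div_self hqD]; ring
        rw [h7, h8]; ring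
    · unfold nonInnerSet
      rw [Set.mem_setOf_eq]
      push_neg
      constructor <;> intro hh <;> [linarith; linarith]

end Main

/-- If `X ∈ P(n)` has some partial sum strictly between `0` and `1`, then `X`
is a proper convex combination of two matrices of `P(n)`, each having strictly
more non-inner partial sums than `X`. -/
theorem exists_convex_decomposition_of_inner (n : ℕ)
    (X : Matrix (Fin n) (Fin n) ℝ) (hX : X ∈ PolySet n)
    (h : ∃ p : (Fin n × Fin n) × Bool, 0 < partialSum X p ∧ partialSum X p < 1) :
    ∃ X' ∈ PolySet n, ∃ X'' ∈ PolySet n, ∃ lam : ℝ, 0 < lam ∧ lam < 1 ∧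
      X = lam • X' + (1 - lam) • X'' ∧
      nonInnerSet X ⊂ nonInnerSet X' ∧ nonInnerSet X ⊂ nonInnerSet X'' := by
  classical
  obtain ⟨p0, hs0, hs1⟩ := h
  set u := auxH n X (p0.1.1 + 1) (p0.1.2 + 1) with hu
  set v := auxH n X (auxTl p0).1 (auxTl p0).2 with hv
  have hpH : partialSum X p0 = u - v := partialSum_H X p0
  have hfr : Int.fract u ≠ Int.fract v := by
    intro heq
    obtain ⟨z, hz⟩ := Int.fract_eq_fract.mp heq
    rw [hpH, hz] at hs0 hs1
    have h0 : (0 : ℤ) < z := by exact_mod_cast hs0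
    have h1' : z < 1 := by exact_mod_cast hs1
    omega
  set c := if Int.fract u = 0 then Int.fract v else Int.fract u with hc
  have hc0 : c ≠ 0 := by
    rw [hc]
    split
    · next h' => exact fun h'' => hfr (h'.trans h''.symm)
    · next h' => exact h'
  set D := auxD n X c with hD
  have hone : partialSum D p0 ≠ 0 := by
    rw [hD, partialSum_D X hc0 p0]
    unfold auxE
    rw [← hu, ← hv]
    by_cases h' : Int.fract u = 0
    · have hcv : c = Int.fract v := by rw [hc, if_pos h']
      rw [if_neg (by rw [hcv]; exact hfr), if_pos hcv.symm]
      norm_num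
    · have hcu : c = Int.fract u := by rw [hc, if_neg h']
      rw [if_pos hcu.symm, if_neg (by rw [hcu]; exact fun hh => hfr hh.symm)]
      norm_num
  have h1 : ∀ p, (partialSum X p = 0 ∨ partialSum X p = 1) → partialSum D p = 0 := by
    intro p hp
    apply auxD_zero_of_int X hc0
    rcases hp with hp | hp
    · exact ⟨0, by rw [hp]; norm_num⟩
    · exact ⟨1, by rw [hp]; norm_num⟩
  have h2 : ∀ j, ∑ i, D i j = 0 := fun j => auxD_colsum n X c hc0 hX.2.2.1 j
  have h3 : ∀ i, ∑ j, D i j = 0 := fun i => auxD_rowsum n X c hc0 hX.2.2.2 i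
  obtain ⟨t1, ht1, hM1, hss1⟩ := step_lemma X hX D h1 h2 h3 ⟨p0, hone⟩
  have h1' : ∀ p, (partialSum X p = 0 ∨ partialSum X p = 1) →
      partialSum (-D) p = 0 := by
    intro p hp; rw [partialSum_neg, h1 p hp, neg_zero]
  have h2' : ∀ j, ∑ i, (-D) i j = 0 := by
    intro j; simp [Matrix.neg_apply, Finset.sum_neg_distrib, h2 j]
  have h3' : ∀ i, ∑ j, (-D) i j = 0 := by
    intro i; simp [Matrix.neg_apply, Finset.sum_neg_distrib, h3 i]
  have h4' : ∃ p, partialSum (-D) p ≠ 0 :=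
    ⟨p0, by rw [partialSum_neg]; simpa using hone⟩
  obtain ⟨t2, ht2, hM2, hss2⟩ := step_lemma X hX (-D) h1' h2' h3' h4'
  refine ⟨X + t1 • D, hM1, X + t2 • (-D), hM2, t2 / (t1 + t2), ?_, ?_, ?_, hss1, hss2⟩
  · exact div_pos ht2 (by linarith)
  · rw [div_lt_one (by linarith)]; linarith
  · funext i j
    have h12 : t1 + t2 ≠ 0 := by positivity
    simp only [Matrix.add_apply, Matrix.smul_apply, Matrix.neg_apply, smul_eq_mul,
      Pi.add_apply, Pi.smul_apply]
    field_simp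
    ring
end

section
/- For every n ≥ 1, the set of extreme points of the polytope ASM_n is exactly the set of n×n alternating sign matrices; that is, every n×n alternating sign matrix is an extreme point of ASM_n and every extreme point of ASM_n is an n×n alternating sign matrix. -/
open scoped BigOperators

/-!
Partial column sums of an alternating sign matrix lie in `{0, 1}`: down a column the nonzero
entries alternate and the column sums to `1`, so they read `1, -1, 1, …, 1`. Since a matrix is
determined by its partial column sums `c(M)`, an ASM `A` is then the unique maximiser over all
ASMs of the linear functional `M ↦ ⟪2 c(A) - 1, c(M)⟫`, and a strict maximiser over `S` is an
extreme point of `convexHull S`. Conversely every extreme point of a convex hull lies in the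
generating set.
-/

open Finset

theorem eq_of_mem_convexHull_of_forall_lt {E : Type*} [AddCommGroup E] [Module ℝ E] {S : Set E}
    {x y : E} (f : E →ₗ[ℝ] ℝ) (hx : x ∈ S) (hf : ∀ z ∈ S, z ≠ x → f z < f x)
    (hy : y ∈ convexHull ℝ S) (hxy : f x ≤ f y) : y = x := by
  rcases (S \ {x}).eq_empty_or_nonempty with hS | hS
  · exact convexHull_min (Set.sdiff_eq_empty.1 hS) (convex_singleton x) hy
  rw [← Set.insert_sdiff_self_of_mem hx, convexHull_insert hS, mem_convexJoin] at hy
  obtain ⟨x', hx', z, hz, a, b, -, hb, hab, rfl⟩ := hy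
  rw [Set.mem_singleton_iff] at hx'
  subst x'
  have hfz : f z < f x :=
    convexHull_min (fun w hw => hf w hw.1 hw.2) (convex_halfSpace_lt f.isLinear _) hz
  simp only [map_add, map_smul, smul_eq_mul] at hxy
  have hsplit : f x = a * f x + b * f x := by rw [← add_mul, hab, one_mul]
  obtain rfl : b = 0 := by
    by_contra hb0
    have := mul_pos (hb.lt_of_ne' hb0) (sub_pos.2 hfz)
    linarith
  obtain rfl : a = 1 := by linarith
  simp

theorem mem_extremePoints_convexHull_of_forall_lt {E : Type*} [AddCommGroup E] [Module ℝ E]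
    {S : Set E} {x : E} (f : E →ₗ[ℝ] ℝ) (hx : x ∈ S)
    (hf : ∀ y ∈ S, y ≠ x → f y < f x) : x ∈ (convexHull ℝ S).extremePoints ℝ := by
  have hle : convexHull ℝ S ⊆ {y | f y ≤ f x} := by
    refine convexHull_min (fun y hy => show f y ≤ f x from ?_) (convex_halfSpace_le f.isLinear _)
    obtain rfl | hyx := eq_or_ne y x
    exacts [le_rfl, (hf y hy hyx).le]
  refine mem_extremePoints.2 ⟨subset_convexHull ℝ S hx, fun y₁ hy₁ y₂ hy₂ hxy => ?_⟩
  obtain ⟨a, b, ha, hb, hab, hx'⟩ := hxy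
  have hfx : a * f y₁ + b * f y₂ = f x := by simp [← hx']
  have h₁ : f y₁ ≤ f x := hle hy₁
  have h₂ : f y₂ ≤ f x := hle hy₂
  have hsplit : f x = a * f x + b * f x := by rw [← add_mul, hab, one_mul]
  refine ⟨eq_of_mem_convexHull_of_forall_lt f hx hf hy₁ ?_,
    eq_of_mem_convexHull_of_forall_lt f hx hf hy₂ ?_⟩ <;> by_contra! h
  · linarith [mul_lt_mul_of_pos_left h ha, mul_le_mul_of_nonneg_left h₂ hb.le]
  · linarith [mul_lt_mul_of_pos_left h hb, mul_le_mul_of_nonneg_left h₁ ha.le]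

theorem Finset.forall_eq_zero_or_exists_last_ne_zero {ι M : Type*} [LinearOrder ι] [Zero M]
    (s : Finset ι) (v : ι → M) :
    (∀ k ∈ s, v k = 0) ∨ ∃ j ∈ s, v j ≠ 0 ∧ ∀ k ∈ s, j < k → v k = 0 := by
  classical
  refine or_iff_not_imp_left.2 fun h => ?_
  obtain ⟨k, hk, hvk⟩ := not_forall₂.1 h
  obtain ⟨j, hj, hmax⟩ :=
    (s.filter (v · ≠ 0)).exists_max_image id ⟨k, mem_filter.2 ⟨hk, hvk⟩⟩
  rw [mem_filter] at hj
  exact ⟨j, hj.1, hj.2, fun k hk hjk =>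
    by_contra fun hvk => (hmax k (mem_filter.2 ⟨hk, hvk⟩)).not_gt hjk⟩

theorem sum_mul_lt_sum_mul_self_of_zero_one {ι : Type*} [Fintype ι] {a b : ι → ℝ}
    (ha : ∀ i, a i = 0 ∨ a i = 1) (hb : ∀ i, b i = 0 ∨ b i = 1) (hne : b ≠ a) :
    ∑ i, (2 * a i - 1) * b i < ∑ i, (2 * a i - 1) * a i := by
  obtain ⟨i, hi⟩ := Function.ne_iff.1 hne
  refine sum_lt_sum (fun k _ => ?_) ⟨i, mem_univ i, ?_⟩
  · rcases ha k with h | h <;> rcases hb k with h' | h' <;> norm_num [h, h']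
  · rcases ha i with h | h <;> rcases hb i with h' | h' <;> simp_all

section AlternatesSign

variable {n : ℕ} {v : Fin n → ℝ}

theorem AlternatesSign.two_mul_sum_Iic_eq (halt : AlternatesSign v) {j₀ : Fin n}
    (hj₀ : v j₀ ≠ 0) (hbefore : ∀ k < j₀, v k = 0) {j : Fin n} (hj : v j ≠ 0) :
    2 * ∑ k ∈ Iic j, v k = v j₀ + v j := by
  induction j using WellFoundedLT.induction with
  | ind j ih =>
  rw [← Iio_insert, sum_insert (by simp)]
  rcases (Iio j).forall_eq_zero_or_exists_last_ne_zero v with hzero | ⟨j', hj'j, hj', hzero⟩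
  · obtain rfl : j = j₀ := le_antisymm
      (not_lt.1 fun h => hj₀ (hzero j₀ (mem_Iio.2 h))) (not_lt.1 fun h => hj (hbefore j h))
    rw [sum_eq_zero hzero]
    ring
  · rw [mem_Iio] at hj'j
    have hflip : v j = -v j' :=
      halt j' j hj'j hj' hj fun k hk hkj => hzero k (mem_Iio.2 hkj) hk
    have hsum : ∑ k ∈ Iio j, v k = ∑ k ∈ Iic j', v k :=
      (sum_subset (fun k hk => mem_Iio.2 ((mem_Iic.1 hk).trans_lt hj'j)) fun k hk hk' =>
        hzero k hk (not_le.1 (by simpa using hk'))).symm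
    have := ih j' hj'j hj'
    rw [hsum]
    linarith

theorem AlternatesSign.sum_Iic_eq_zero_or_eq_one (halt : AlternatesSign v)
    (hv : ∀ j, v j = 0 ∨ v j = 1 ∨ v j = -1) (hsum : ∑ j, v j = 1) (i : Fin n) :
    ∑ k ∈ Iic i, v k = 0 ∨ ∑ k ∈ Iic i, v k = 1 := by
  have hle : ∀ k, v k ≤ 1 := fun k => by rcases hv k with h | h | h <;> linarith
  obtain ⟨j₁, -, hj₁⟩ := exists_ne_zero_of_sum_ne_zero (hsum.trans_ne one_ne_zero)
  obtain ⟨j₀, hj₀, hmin⟩ := wellFounded_lt.has_min {j | v j ≠ 0} ⟨j₁, hj₁⟩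
  have hbefore : ∀ k < j₀, v k = 0 := fun k hk => by_contra fun h => hmin k h hk
  have hfirst : v j₀ = 1 := by
    obtain hzero | ⟨j, -, hj, hafter⟩ := univ.forall_eq_zero_or_exists_last_ne_zero v
    · simp [sum_eq_zero hzero] at hsum
    · have h2 := halt.two_mul_sum_Iic_eq hj₀ hbefore hj
      rw [sum_subset (subset_univ _) fun k _ hk => hafter k (mem_univ k)
        (not_le.1 (by simpa using hk)), hsum] at h2
      linarith [hle j, hle j₀]
  rcases (Iic i).forall_eq_zero_or_exists_last_ne_zero v with hzero | ⟨j, hji, hj, hafter⟩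
  · exact Or.inl (sum_eq_zero hzero)
  · have h2 := halt.two_mul_sum_Iic_eq hj₀ hbefore hj
    rw [sum_subset (Iic_subset_Iic.2 (mem_Iic.1 hji)) fun k hk hk' =>
      hafter k hk (not_le.1 (by simpa using hk')), hfirst] at h2
    rcases hv j with h | h | h
    exacts [absurd h hj, Or.inr (by linarith), Or.inl (by linarith)]

end AlternatesSign

section PartialSums

variable {n : ℕ}

def colPartialSum (M : Matrix (Fin n) (Fin n) ℝ) (i j : Fin n) : ℝ :=
  ∑ k ∈ Iic i, M k j

theorem colPartialSum_injective : Function.Injective (colPartialSum (n := n)) := by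
  intro M N h
  ext i j
  induction i using WellFoundedLT.induction with
  | ind i ih =>
  have hsplit (P : Matrix (Fin n) (Fin n) ℝ) :
      colPartialSum P i j = P i j + ∑ k ∈ Iio i, P k j := by
    rw [colPartialSum, ← Iio_insert, sum_insert (by simp)]
  have hIio : ∑ k ∈ Iio i, M k j = ∑ k ∈ Iio i, N k j :=
    sum_congr rfl fun k hk => ih k (mem_Iio.1 hk)
  have hij := congrFun (congrFun h i) j
  rw [hsplit, hsplit, hIio] at hij
  linarith

theorem IsASM.colPartialSum_eq_zero_or_eq_one {A : Matrix (Fin n) (Fin n) ℝ} (hA : IsASM n A)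
    (i j : Fin n) : colPartialSum A i j = 0 ∨ colPartialSum A i j = 1 :=
  (hA.2.2.2.2 j).sum_Iic_eq_zero_or_eq_one (fun k => hA.1 k j) (hA.2.2.1 j) i

def colPartialSumPairing (A : Matrix (Fin n) (Fin n) ℝ) :
    Matrix (Fin n) (Fin n) ℝ →ₗ[ℝ] ℝ where
  toFun M := ∑ p : Fin n × Fin n, (2 * colPartialSum A p.1 p.2 - 1) * colPartialSum M p.1 p.2
  map_add' M N := by
    simp only [colPartialSum, Matrix.add_apply, sum_add_distrib, mul_add]
  map_smul' c M := by
    simp only [colPartialSum, Matrix.smul_apply, smul_eq_mul, ← mul_sum, RingHom.id_apply]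
    rw [mul_sum]
    exact sum_congr rfl fun _ _ => by ring

theorem IsASM.colPartialSumPairing_lt {A B : Matrix (Fin n) (Fin n) ℝ} (hA : IsASM n A)
    (hB : IsASM n B) (hne : B ≠ A) : colPartialSumPairing A B < colPartialSumPairing A A :=
  sum_mul_lt_sum_mul_self_of_zero_one
    (fun p => hA.colPartialSum_eq_zero_or_eq_one p.1 p.2)
    (fun p => hB.colPartialSum_eq_zero_or_eq_one p.1 p.2)
    fun h => hne (colPartialSum_injective (funext₂ fun i j => congrFun h (i, j)))

end PartialSums

theorem extremePoints_asmPolytope_general (n : ℕ) :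
    Set.extremePoints ℝ (ASMPolytope n) =
      {A : Matrix (Fin n) (Fin n) ℝ | IsASM n A} :=
  Set.Subset.antisymm extremePoints_convexHull_subset fun A hA =>
    mem_extremePoints_convexHull_of_forall_lt (colPartialSumPairing A) hA
      fun _ hB hne => hA.colPartialSumPairing_lt hB hne

/-- The extreme points of the alternating sign matrix polytope are exactly the
`n × n` alternating sign matrices. -/
theorem extremePoints_asmPolytope (n : ℕ) (hn : 1 ≤ n) :
    Set.extremePoints ℝ (ASMPolytope n) =
      {A : Matrix (Fin n) (Fin n) ℝ | IsASM n A} :=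
  extremePoints_asmPolytope_general n
end

section
/- For every n ≥ 1, the dimension of ASM_n equals (n−1)^2; that is, the affine span of the n×n alternating sign matrices in ℝ^{n×n} has dimension (n−1)^2. -/
open scoped BigOperators

/-
Differences of alternating sign matrices have all row and column sums zero, and a matrix with
zero line sums is determined by its top-left `(n-1) × (n-1)` block; hence the dimension is at
most `(n-1)²`. Conversely, already the permutation matrices span enough: for indices `k, l < n`
and the transposition `σ = (k l)`, the top-left block of `P_σ - P_{σ ∘ (k n)}` is the matrix
unit `E_{kl}`.
-/

open Finset Equiv

namespace Matrix

variable (ι R : Type*) [Fintype ι]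

def lineSumsZero [Semiring R] : Submodule R (Matrix ι ι R) where
  carrier := {M | (∀ i, ∑ j, M i j = 0) ∧ ∀ j, ∑ i, M i j = 0}
  add_mem' {A B} hA hB :=
    ⟨fun i => by simp [sum_add_distrib, hA.1 i, hB.1 i],
      fun j => by simp [sum_add_distrib, hA.2 j, hB.2 j]⟩
  zero_mem' := ⟨fun _ => by simp, fun _ => by simp⟩
  smul_mem' c M hM :=
    ⟨fun i => by simp [← mul_sum, hM.1 i], fun j => by simp [← mul_sum, hM.2 j]⟩

variable {ι R}

theorem vectorSpan_le_lineSumsZero [Ring R] {s : Set (Matrix ι ι R)}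
    (hrow : ∀ A ∈ s, ∀ i, ∑ j, A i j = 1) (hcol : ∀ A ∈ s, ∀ j, ∑ i, A i j = 1) :
    vectorSpan R s ≤ lineSumsZero ι R := by
  rw [vectorSpan_def, Submodule.span_le]
  rintro _ ⟨A, hA, B, hB, rfl⟩
  exact ⟨fun i => by simp [sum_sub_distrib, hrow A hA i, hrow B hB i],
    fun j => by simp [sum_sub_distrib, hcol A hA j, hcol B hB j]⟩

variable (R) in
def topLeftBlock [Semiring R] (m : ℕ) :
    Matrix (Fin (m + 1)) (Fin (m + 1)) R →ₗ[R] Matrix (Fin m) (Fin m) R where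
  toFun M := M.submatrix Fin.castSucc Fin.castSucc
  map_add' _ _ := rfl
  map_smul' _ _ := rfl

@[simp]
theorem topLeftBlock_apply [Semiring R] {m : ℕ} (M : Matrix (Fin (m + 1)) (Fin (m + 1)) R)
    (i j : Fin m) : topLeftBlock R m M i j = M i.castSucc j.castSucc :=
  rfl

theorem eq_zero_of_mem_lineSumsZero_of_topLeftBlock_eq_zero [Ring R] {m : ℕ}
    {M : Matrix (Fin (m + 1)) (Fin (m + 1)) R} (hM : M ∈ lineSumsZero _ R)
    (h : topLeftBlock R m M = 0) : M = 0 := by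
  have hblock (i j : Fin m) : M i.castSucc j.castSucc = 0 := by simpa using congr_fun₂ h i j
  have hlastCol (i : Fin m) : M i.castSucc (Fin.last m) = 0 := by
    simpa [Fin.sum_univ_castSucc, hblock] using hM.1 i.castSucc
  have hlastRow (j : Fin (m + 1)) : M (Fin.last m) j = 0 := by
    induction j using Fin.lastCases with
    | last => simpa [Fin.sum_univ_castSucc, hlastCol] using hM.2 (Fin.last m)
    | cast j => simpa [Fin.sum_univ_castSucc, hblock] using hM.2 j.castSucc
  ext i j
  induction i using Fin.lastCases with
  | last => exact hlastRow j
  | cast i =>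
    induction j using Fin.lastCases with
    | last => exact hlastCol i
    | cast j => exact hblock i j

theorem topLeftBlock_permMatrix_sub_permMatrix [Ring R] {m : ℕ} (k l : Fin m) :
    topLeftBlock R m ((Equiv.swap k.castSucc l.castSucc).permMatrix R -
        (Equiv.swap k.castSucc l.castSucc * Equiv.swap k.castSucc (Fin.last m)).permMatrix R) =
      single k l 1 := by
  ext i j
  simp only [topLeftBlock_apply, sub_apply, PEquiv.toMatrix_apply, toPEquiv_apply,
    Option.mem_def, Option.some_inj, Perm.mul_apply, single_apply]
  by_cases hik : k = i
  · subst hik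
    simp [(Fin.castSucc_ne_last _).symm, swap_apply_of_ne_of_ne]
  · have hik' : i.castSucc ≠ k.castSucc := fun h => hik (Fin.castSucc_injective _ h).symm
    simp [hik, swap_apply_of_ne_of_ne hik' (Fin.castSucc_ne_last i)]

theorem map_topLeftBlock_vectorSpan_eq_top [Ring R] {m : ℕ}
    {s : Set (Matrix (Fin (m + 1)) (Fin (m + 1)) R)}
    (hs : ∀ σ : Perm (Fin (m + 1)), σ.permMatrix R ∈ s) :
    (vectorSpan R s).map (topLeftBlock R m) = ⊤ := by
  rw [eq_top_iff, ← (stdBasis R (Fin m) (Fin m)).span_eq, Submodule.span_le]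
  rintro _ ⟨⟨k, l⟩, rfl⟩
  rw [stdBasis_eq_single, ← topLeftBlock_permMatrix_sub_permMatrix]
  exact Submodule.mem_map_of_mem (vsub_mem_vectorSpan R (hs _) (hs _))

theorem finrank_vectorSpan_of_permMatrix_mem [Ring R] [StrongRankCondition R] {m : ℕ}
    {s : Set (Matrix (Fin (m + 1)) (Fin (m + 1)) R)}
    (hs : ∀ σ : Perm (Fin (m + 1)), σ.permMatrix R ∈ s)
    (hrow : ∀ A ∈ s, ∀ i, ∑ j, A i j = 1) (hcol : ∀ A ∈ s, ∀ j, ∑ i, A i j = 1) :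
    Module.finrank R (vectorSpan R s) = m ^ 2 := by
  let f := (topLeftBlock R m).domRestrict (vectorSpan R s)
  have hinj : Function.Injective f := by
    rw [← LinearMap.ker_eq_bot, LinearMap.ker_eq_bot']
    intro M hM
    exact Subtype.ext (eq_zero_of_mem_lineSumsZero_of_topLeftBlock_eq_zero
      (vectorSpan_le_lineSumsZero hrow hcol M.2) hM)
  have hsurj : Function.Surjective f := by
    rw [← LinearMap.range_eq_top, LinearMap.range_domRestrict]
    exact map_topLeftBlock_vectorSpan_eq_top hs
  rw [(LinearEquiv.ofBijective f ⟨hinj, hsurj⟩).finrank_eq]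
  simp [Module.finrank_matrix, sq]

end Matrix

theorem alternatesSign_pi_single {n : ℕ} (a : Fin n) (c : ℝ) :
    AlternatesSign (Pi.single a c) := by
  intro j₁ j₂ hlt h₁ h₂ _
  rw [Pi.single_apply] at h₁ h₂
  simp_all

theorem isASM_permMatrix {n : ℕ} (σ : Perm (Fin n)) : IsASM n (σ.permMatrix ℝ) := by
  have hrow (i : Fin n) : σ.permMatrix ℝ i = Pi.single (σ i) 1 :=
    PEquiv.toMatrix_toPEquiv_apply σ i
  have hcol (j : Fin n) : (fun i => σ.permMatrix ℝ i j) = Pi.single (σ.symm j) 1 :=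
    PEquiv.transpose_toMatrix_toPEquiv_apply σ j
  refine ⟨fun i j => ?_, fun i => ?_, fun j => ?_, fun i => ?_, fun j => ?_⟩
  · rw [hrow, Pi.single_apply]
    split_ifs <;> simp
  · simp
  · simpa using congr_arg (∑ i, · i) (hcol j)
  · exact hrow i ▸ alternatesSign_pi_single (σ i) 1
  · exact hcol j ▸ alternatesSign_pi_single (σ.symm j) 1

/-- The dimension of the alternating sign matrix polytope, i.e. of the affine
span of the `n × n` alternating sign matrices, is `(n-1)²`. -/
theorem dim_asmPolytope (n : ℕ) (hn : 1 ≤ n) :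
    Module.finrank ℝ
      (affineSpan ℝ {A : Matrix (Fin n) (Fin n) ℝ | IsASM n A}).direction =
      (n - 1) ^ 2 := by
  obtain ⟨m, rfl⟩ := Nat.exists_eq_add_of_le' hn
  rw [direction_affineSpan, Nat.add_sub_cancel]
  exact Matrix.finrank_vectorSpan_of_permMatrix_mem isASM_permMatrix
    (fun _ hA => hA.2.1) (fun _ hA => hA.2.2.1)
end

section
/- Let z = (z_1,…,z_n) ∈ ℝ^n be strictly decreasing and let X ∈ ASM_n. Then the vector zX is majorized by z; that is, ∑_{j=1}^{n} (zX)_j = ∑_{j=1}^{n} z_j, and for every subset J ⊆ {1,…,n}, ∑_{j∈J} (zX)_j ≤ ∑_{j=1}^{|J|} z_j. -/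
open scoped BigOperators

open Finset

namespace ASMmaj

variable {n : ℕ}

noncomputable def psum (v : Fin n → ℝ) (m : ℕ) : ℝ :=
  ∑ i ∈ Finset.univ.filter (fun i : Fin n => (i : ℕ) < m), v i

lemma psum_zero (v : Fin n → ℝ) : psum v 0 = 0 := by simp [psum]

lemma psum_succ (v : Fin n → ℝ) {m : ℕ} (h : m < n) :
    psum v (m + 1) = psum v m + v ⟨m, h⟩ := by
  unfold psum
  have hset : Finset.univ.filter (fun i : Fin n => (i : ℕ) < m + 1)
      = insert (⟨m, h⟩ : Fin n) (Finset.univ.filter fun i : Fin n => (i : ℕ) < m) := by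
    ext i
    simp only [mem_filter, mem_univ, true_and, mem_insert, Fin.ext_iff]
    omega
  rw [hset, Finset.sum_insert (by simp)]
  ring

lemma psum_ge (v : Fin n → ℝ) {m : ℕ} (h : n ≤ m) : psum v m = ∑ i, v i := by
  unfold psum
  have : Finset.univ.filter (fun i : Fin n => (i : ℕ) < m) = Finset.univ := by
    ext i; simp only [mem_filter, mem_univ, true_and, iff_true]; omega
  rw [this]

lemma inv (v : Fin n → ℝ) (halt : AlternatesSign v) :
    ∀ m : ℕ,
      (∀ i : Fin n, (i : ℕ) < m → v i = 0) ∨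
      ∃ p q : Fin n, (v p ≠ 0 ∧ ∀ i, i < p → v i = 0) ∧ (q : ℕ) < m ∧ v q ≠ 0 ∧
        (∀ r : Fin n, q < r → (r : ℕ) < m → v r = 0) ∧ psum v m = (v p + v q) / 2 := by
  intro m
  induction m with
  | zero => left; intro i hi; omega
  | succ m ih =>
    by_cases hm : m < n
    · have hieq : ((⟨m, hm⟩ : Fin n) : ℕ) = m := rfl
      by_cases hv : v ⟨m, hm⟩ = 0
      · rcases ih with h0 | ⟨p, q, hp, hq, hqnz, hgap, hs⟩
        · left
          intro r hr
          rcases Nat.lt_or_ge (r : ℕ) m with h | h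
          · exact h0 r h
          · have : r = ⟨m, hm⟩ := Fin.ext (by omega)
            rwa [this]
        · right
          refine ⟨p, q, hp, by omega, hqnz, ?_, ?_⟩
          · intro r h1 h2
            rcases Nat.lt_or_ge (r : ℕ) m with h | h
            · exact hgap r h1 h
            · have : r = ⟨m, hm⟩ := Fin.ext (by omega)
              rwa [this]
          · rw [psum_succ v hm, hv, add_zero, hs]
      · rcases ih with h0 | ⟨p, q, hp, hq, hqnz, hgap, hs⟩
        · right
          refine ⟨⟨m, hm⟩, ⟨m, hm⟩, ⟨hv, fun r hr => h0 r hr⟩, by omega, hv, ?_, ?_⟩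
          · intro r h1 h2
            have := Fin.lt_def.mp h1
            omega
          · have hz : psum v m = 0 := by
              apply Finset.sum_eq_zero
              intro i hi
              exact h0 i (mem_filter.mp hi).2
            rw [psum_succ v hm, hz]
            ring
        · right
          have hqi : q < (⟨m, hm⟩ : Fin n) := by
            rw [Fin.lt_def]; omega
          have hzero : ∀ k : Fin n, q < k → k < (⟨m, hm⟩ : Fin n) → v k = 0 := by
            intro k h1 h2
            exact hgap k h1 (by rw [Fin.lt_def] at h2; omega)
          have hne := halt q ⟨m, hm⟩ hqi hqnz hv hzero
          refine ⟨p, ⟨m, hm⟩, hp, by omega, hv, ?_, ?_⟩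
          · intro r h1 h2
            have := Fin.lt_def.mp h1
            omega
          · rw [psum_succ v hm, hs, hne]
            ring
    · rcases ih with h0 | ⟨p, q, hp, hq, hqnz, hgap, hs⟩
      · left; intro r hr; exact h0 r (by omega)
      · right
        refine ⟨p, q, hp, by omega, hqnz, fun r h1 h2 => hgap r h1 (by omega), ?_⟩
        rw [psum_ge v (by omega : n ≤ m + 1), ← psum_ge v (by omega : n ≤ m), hs]

lemma psum_bounds (v : Fin n → ℝ) (h01 : ∀ i, v i = 0 ∨ v i = 1 ∨ v i = -1)
    (hsum : ∑ i, v i = 1) (halt : AlternatesSign v) (m : ℕ) :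
    0 ≤ psum v m ∧ psum v m ≤ 1 := by
  have hsn : psum v n = 1 := by rw [psum_ge v le_rfl, hsum]
  rcases inv v halt n with h0 | ⟨p0, q0, hp0, _, hq0nz, _, hs0⟩
  · exfalso
    have : (1 : ℝ) = 0 := by
      rw [← hsn]
      exact Finset.sum_eq_zero fun i hi => h0 i i.isLt
    norm_num at this
  · have hvp0 : v p0 = 1 := by
      rw [hsn] at hs0
      rcases h01 p0 with h | h | h <;> rcases h01 q0 with h' | h' | h' <;>
        first
        | exact h
        | (exfalso; rw [h, h'] at hs0; norm_num at hs0)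
        | (exfalso; exact hp0.1 h)
        | (exfalso; exact hq0nz h')
    have hfirst : ∀ p : Fin n, v p ≠ 0 → (∀ i, i < p → v i = 0) → v p = 1 := by
      intro p hnz hbefore
      have hpp : p = p0 := by
        by_contra hne
        rcases lt_or_gt_of_ne hne with h | h
        · exact hnz (hp0.2 p h)
        · exact hp0.1 (hbefore p0 h)
      rw [hpp]; exact hvp0
    rcases inv v halt m with h0 | ⟨p, q, hp, hq, hqnz, hgap, hs⟩
    · have hz : psum v m = 0 :=
        Finset.sum_eq_zero fun i hi => h0 i (mem_filter.mp hi).2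
      rw [hz]; norm_num
    · have hp1 : v p = 1 := hfirst p hp.1 hp.2
      rcases h01 q with h | h | h
      · exact absurd h hqnz
      · rw [hs, hp1, h]; norm_num
      · rw [hs, hp1, h]; norm_num

lemma abel (f g : ℕ → ℝ) (hf : ∀ m, f (m + 1) ≤ f m) (hg : ∀ m, g m ≤ 0)
    (hg0 : g 0 = 0) :
    ∀ N, ∑ m ∈ Finset.range N, f m * (g (m + 1) - g m) ≤ f N * g N := by
  intro N
  induction N with
  | zero => simp [hg0]
  | succ N ih =>
    rw [Finset.sum_range_succ]
    nlinarith [ih, hf N, hg (N + 1)]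

lemma asm_sum_eq (z : Fin n → ℝ) (A : Matrix (Fin n) (Fin n) ℝ) (hA : IsASM n A) :
    ∑ j, ∑ i, z i * A i j = ∑ j, z j := by
  rw [Finset.sum_comm]
  calc ∑ i, ∑ j, z i * A i j = ∑ i, z i * ∑ j, A i j := by
        refine Finset.sum_congr rfl fun i _ => ?_
        rw [Finset.mul_sum]
    _ = ∑ i, z i := by
        refine Finset.sum_congr rfl fun i _ => ?_
        rw [hA.2.1 i, mul_one]

lemma asm_ineq (z : Fin n → ℝ) (hz : StrictAnti z) (A : Matrix (Fin n) (Fin n) ℝ)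
    (hA : IsASM n A) (J : Finset (Fin n)) :
    ∑ j ∈ J, ∑ i, z i * A i j ≤
      ∑ j ∈ Finset.univ.filter (fun j : Fin n => (j : ℕ) < J.card), z j := by
  rcases Nat.eq_zero_or_pos n with hn | hn
  · subst hn
    have hJ : J = ∅ := Finset.eq_empty_of_isEmpty J
    simp [hJ]
  set k := J.card with hk
  have hkn : k ≤ n := by
    have := Finset.card_le_univ J
    simpa using this
  set f : ℕ → ℝ := fun m => z ⟨min m (n - 1), by omega⟩ with hf
  set S : ℕ → ℝ := fun m => ∑ j ∈ J, psum (fun i => A i j) m with hS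
  set T : ℕ → ℝ := fun m => ((min m k : ℕ) : ℝ) with hT
  have hfmono : ∀ m, f (m + 1) ≤ f m := by
    intro m
    apply hz.antitone
    rw [Fin.le_def]
    show m ⊓ (n - 1) ≤ (m + 1) ⊓ (n - 1)
    omega
  have hcol : ∀ (j : Fin n) (m : ℕ), 0 ≤ psum (fun i => A i j) m ∧ psum (fun i => A i j) m ≤ 1 :=
    fun j m => psum_bounds _ (fun i => hA.1 i j) (hA.2.2.1 j) (hA.2.2.2.2 j) m
  have hS_le_k : ∀ m, S m ≤ (k : ℝ) := by
    intro m
    calc S m ≤ ∑ _j ∈ J, (1 : ℝ) := Finset.sum_le_sum fun j _ => (hcol j m).2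
      _ = (k : ℝ) := by simp [hk]
  have hS_le_m : ∀ m, S m ≤ (m : ℝ) := by
    intro m
    have h1 : S m ≤ ∑ j, psum (fun i => A i j) m :=
      Finset.sum_le_sum_of_subset_of_nonneg (Finset.subset_univ J)
        (fun j _ _ => (hcol j m).1)
    have h2 : ∑ j, psum (fun i => A i j) m
        = ((Finset.univ.filter (fun i : Fin n => (i : ℕ) < m)).card : ℝ) := by
      unfold psum
      rw [Finset.sum_comm]
      calc ∑ i ∈ Finset.univ.filter (fun i : Fin n => (i : ℕ) < m), ∑ j, A i j
          = ∑ i ∈ Finset.univ.filter (fun i : Fin n => (i : ℕ) < m), (1 : ℝ) :=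
            Finset.sum_congr rfl fun i _ => hA.2.1 i
        _ = _ := by simp
    have h3 : (Finset.univ.filter (fun i : Fin n => (i : ℕ) < m)).card ≤ m := by
      have hmem : ∀ i ∈ Finset.univ.filter (fun i : Fin n => (i : ℕ) < m),
          (i : ℕ) ∈ Finset.range m := by
        intro i hi
        rw [Finset.mem_range]
        exact (Finset.mem_filter.mp hi).2
      have := Finset.card_le_card_of_injOn (fun i : Fin n => (i : ℕ)) hmem
        (Fin.val_injective.injOn)
      simpa using this
    calc S m ≤ _ := h1
      _ = _ := h2
      _ ≤ (m : ℝ) := by exact_mod_cast h3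
  have hG_le : ∀ m, S m - T m ≤ 0 := by
    intro m
    have : T m = min (m : ℝ) (k : ℝ) := by
      simp only [hT, Nat.cast_min]
    rw [this]
    have := le_min (hS_le_m m) (hS_le_k m)
    linarith
  have hG0 : S 0 - T 0 = 0 := by
    simp [hS, hT, psum_zero]
  have hGn : S n - T n = 0 := by
    have hSn : S n = (k : ℝ) := by
      rw [hS]
      calc ∑ j ∈ J, psum (fun i => A i j) n = ∑ j ∈ J, (1 : ℝ) := by
            refine Finset.sum_congr rfl fun j _ => ?_
            rw [psum_ge _ le_rfl, hA.2.2.1 j]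
        _ = (k : ℝ) := by simp [hk]
    have hTn : T n = (k : ℝ) := by
      simp only [hT]
      congr 1
      omega
    rw [hSn, hTn]; ring
  have habel := abel f (fun m => S m - T m) hfmono hG_le hG0 n
  rw [hGn, mul_zero] at habel
  -- identities
  have idL : ∑ j ∈ J, ∑ i, z i * A i j = ∑ m ∈ Finset.range n, f m * (S (m + 1) - S m) := by
    rw [Finset.sum_comm]
    rw [← Fin.sum_univ_eq_sum_range (fun m => f m * (S (m + 1) - S m)) n]
    refine Finset.sum_congr rfl fun i _ => ?_
    have hfi : f (i : ℕ) = z i := by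
      simp only [hf]
      congr 1
      apply Fin.ext
      show (i : ℕ) ⊓ (n - 1) = (i : ℕ)
      have := i.isLt
      omega
    have hSd : S ((i : ℕ) + 1) - S (i : ℕ) = ∑ j ∈ J, A i j := by
      rw [hS]
      rw [← Finset.sum_sub_distrib]
      refine Finset.sum_congr rfl fun j _ => ?_
      rw [psum_succ (fun i' => A i' j) i.isLt]
      simp
    rw [hfi, hSd, Finset.mul_sum]
  have idR : ∑ j ∈ Finset.univ.filter (fun j : Fin n => (j : ℕ) < k), z j
      = ∑ m ∈ Finset.range n, f m * (T (m + 1) - T m) := by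
    rw [Finset.sum_filter]
    rw [← Fin.sum_univ_eq_sum_range (fun m => f m * (T (m + 1) - T m)) n]
    refine Finset.sum_congr rfl fun i _ => ?_
    have hfi : f (i : ℕ) = z i := by
      simp only [hf]
      congr 1
      apply Fin.ext
      show (i : ℕ) ⊓ (n - 1) = (i : ℕ)
      have := i.isLt
      omega
    by_cases h : (i : ℕ) < k
    · have hT1 : T ((i : ℕ) + 1) = (((i : ℕ) + 1 : ℕ) : ℝ) := by
        show ((((i : ℕ) + 1) ⊓ k : ℕ) : ℝ) = _
        congr 1
        omega
      have hT2 : T (i : ℕ) = (((i : ℕ) : ℕ) : ℝ) := by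
        show (((i : ℕ) ⊓ k : ℕ) : ℝ) = _
        congr 1
        omega
      rw [if_pos h, hfi, hT1, hT2]
      push_cast
      ring
    · have hT1 : T ((i : ℕ) + 1) = (k : ℝ) := by
        show ((((i : ℕ) + 1) ⊓ k : ℕ) : ℝ) = _
        congr 1
        omega
      have hT2 : T (i : ℕ) = (k : ℝ) := by
        show (((i : ℕ) ⊓ k : ℕ) : ℝ) = _
        congr 1
        omega
      rw [if_neg h, hT1, hT2]
      ring
  have key : ∑ m ∈ Finset.range n, f m * ((S (m + 1) - T (m + 1)) - (S m - T m))
      = (∑ m ∈ Finset.range n, f m * (S (m + 1) - S m))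
        - ∑ m ∈ Finset.range n, f m * (T (m + 1) - T m) := by
    rw [← Finset.sum_sub_distrib]
    refine Finset.sum_congr rfl fun m _ => ?_
    ring
  rw [key] at habel
  rw [idL, idR] at *
  linarith [habel]

end ASMmaj

/-- For a strictly decreasing vector `z` and any `X` in the alternating sign
matrix polytope, the vector `zX` is majorized by `z`: the total sums agree,
and for every subset `J` of the columns, `∑_{j ∈ J} (zX)_j` is at most the sum
of the `|J|` largest (i.e. first) entries of `z`. -/
theorem zX_majorized_by_z (n : ℕ) (z : Fin n → ℝ) (hz : StrictAnti z)
    (X : Matrix (Fin n) (Fin n) ℝ) (hX : X ∈ ASMPolytope n) :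
    (∑ j, ∑ i, z i * X i j = ∑ j, z j) ∧
    ∀ J : Finset (Fin n),
      ∑ j ∈ J, ∑ i, z i * X i j ≤
        ∑ j ∈ Finset.univ.filter (fun j : Fin n => (j : ℕ) < J.card), z j := by
  have hsub : ASMPolytope n ⊆
      {Y : Matrix (Fin n) (Fin n) ℝ |
        (∑ j, ∑ i, z i * Y i j = ∑ j, z j) ∧
        ∀ J : Finset (Fin n),
          ∑ j ∈ J, ∑ i, z i * Y i j ≤
            ∑ j ∈ Finset.univ.filter (fun j : Fin n => (j : ℕ) < J.card), z j} := by
    apply convexHull_min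
    · intro A hA
      exact ⟨ASMmaj.asm_sum_eq z A hA, fun J => ASMmaj.asm_ineq z hz A hA J⟩
    · intro Y hY W hW a b ha hb hab
      have expand : ∀ s : Finset (Fin n),
          ∑ j ∈ s, ∑ i, z i * (a • Y + b • W) i j
            = a * (∑ j ∈ s, ∑ i, z i * Y i j) + b * (∑ j ∈ s, ∑ i, z i * W i j) := by
        intro s
        rw [Finset.mul_sum, Finset.mul_sum, ← Finset.sum_add_distrib]
        refine Finset.sum_congr rfl fun j _ => ?_
        rw [Finset.mul_sum, Finset.mul_sum, ← Finset.sum_add_distrib]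
        refine Finset.sum_congr rfl fun i _ => ?_
        simp only [Matrix.add_apply, Matrix.smul_apply, smul_eq_mul]
        ring
      constructor
      · show ∑ j, ∑ i, z i * (a • Y + b • W) i j = ∑ j, z j
        rw [expand Finset.univ, hY.1, hW.1, ← add_mul, hab, one_mul]
      · intro J
        show ∑ j ∈ J, ∑ i, z i * (a • Y + b • W) i j ≤ _
        rw [expand J]
        have h1 := mul_le_mul_of_nonneg_left (hY.2 J) ha
        have h2 := mul_le_mul_of_nonneg_left (hW.2 J) hb
        calc a * (∑ j ∈ J, ∑ i, z i * Y i j) + b * (∑ j ∈ J, ∑ i, z i * W i j)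
            ≤ a * (∑ j ∈ Finset.univ.filter (fun j : Fin n => (j : ℕ) < J.card), z j)
              + b * (∑ j ∈ Finset.univ.filter (fun j : Fin n => (j : ℕ) < J.card), z j) :=
              add_le_add h1 h2
          _ = _ := by rw [← add_mul, hab, one_mul]
  exact hsub hX
end

section
/- Let A and B be distinct n×n alternating sign matrices. Then the sum, over all pairs of a position (i,j) and a direction d ∈ {up, down, left, right} such that the directional partial sum of A through (i,j) in direction d equals 1, of the corresponding directional partial sum of B, is strictly less than 2n(n+1). Consequently the linear functional X ↦ ∑_{(i,j,d): A-partial-sum = 1} (directional partial sum of X) takes the value 2n(n+1) at A and a strictly smaller value at every other alternating sign matrix. -/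
open scoped BigOperators

/-- The directional partial sum of `X` through position `(i, j)` in direction
`d : Fin 4`, where `0` is down (`∑_{i' ≤ i} x_{i'j}`), `1` is up
(`∑_{i' ≥ i} x_{i'j}`), `2` is right (`∑_{j' ≤ j} x_{ij'}`), and `3` is left
(`∑_{j' ≥ j} x_{ij'}`). -/
def dirPS {n : ℕ} (X : Matrix (Fin n) (Fin n) ℝ) (i j : Fin n) (d : Fin 4) : ℝ :=
  if d = 0 then ∑ i' ∈ Finset.Iic i, X i' j
  else if d = 1 then ∑ i' ∈ Finset.Ici i, X i' j
  else if d = 2 then ∑ j' ∈ Finset.Iic j, X i j'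
  else ∑ j' ∈ Finset.Ici j, X i j'

/-- Invariant: a partial sum of a sign-alternating sequence equals
(first nonzero + last nonzero)/2. -/
lemma alt_prefix_invariant (g : ℕ → ℝ)
    (halt : ∀ j₁ j₂, j₁ < j₂ → g j₁ ≠ 0 → g j₂ ≠ 0 →
      (∀ k, j₁ < k → k < j₂ → g k = 0) → g j₂ = -g j₁) :
    ∀ m, (∀ k, k < m → g k = 0) ∨
      (∃ f l, f ≤ l ∧ l < m ∧ g f ≠ 0 ∧ g l ≠ 0 ∧ (∀ k, k < f → g k = 0) ∧
        (∀ k, l < k → k < m → g k = 0) ∧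
        ∑ k ∈ Finset.range m, g k = (g f + g l) / 2) := by
  intro m
  induction m with
  | zero => left; omega
  | succ m ih =>
    by_cases hg : g m = 0
    · rcases ih with h | ⟨f, l, hfl, hlm, hf, hl, hbf, haf, hsum⟩
      · left; intro k hk
        rcases Nat.lt_succ_iff_lt_or_eq.mp hk with h' | h'
        · exact h k h'
        · rw [h']; exact hg
      · right
        refine ⟨f, l, hfl, hlm.trans (Nat.lt_succ_self m), hf, hl, hbf, ?_, ?_⟩
        · intro k hk hk'
          rcases Nat.lt_succ_iff_lt_or_eq.mp hk' with h' | h'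
          · exact haf k hk h'
          · rw [h']; exact hg
        · rw [Finset.sum_range_succ, hsum, hg, add_zero]
    · rcases ih with h | ⟨f, l, hfl, hlm, hf, hl, hbf, haf, hsum⟩
      · right
        refine ⟨m, m, le_refl m, Nat.lt_succ_self m, hg, hg, h, ?_, ?_⟩
        · intro k hk hk'; omega
        · rw [Finset.sum_range_succ, Finset.sum_eq_zero, zero_add]
          · ring
          · intro k hk; exact h k (Finset.mem_range.mp hk)
      · right
        have hne : g m = -g l := halt l m hlm hl hg (fun k hk hk' => haf k hk hk')
        refine ⟨f, m, hfl.trans hlm.le, Nat.lt_succ_self m, hf, hg, hbf, ?_, ?_⟩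
        · intro k hk hk'; omega
        · rw [Finset.sum_range_succ, hsum, hne]; ring

/-- All prefix sums of an alternating ±1 sequence with total 1 are 0 or 1. -/
lemma alt_prefix_mem (n : ℕ) (g : ℕ → ℝ)
    (hval : ∀ k, g k = 0 ∨ g k = 1 ∨ g k = -1)
    (halt : ∀ j₁ j₂, j₁ < j₂ → g j₁ ≠ 0 → g j₂ ≠ 0 →
      (∀ k, j₁ < k → k < j₂ → g k = 0) → g j₂ = -g j₁)
    (hsum : ∑ k ∈ Finset.range n, g k = 1) :
    ∀ m, ∑ k ∈ Finset.range m, g k = 0 ∨ ∑ k ∈ Finset.range m, g k = 1 := by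
  have inv := alt_prefix_invariant g halt
  obtain ⟨f, l, hfl, hln, hf, hl, hbf, haf, hs⟩ :
      ∃ f l, f ≤ l ∧ l < n ∧ g f ≠ 0 ∧ g l ≠ 0 ∧ (∀ k, k < f → g k = 0) ∧
        (∀ k, l < k → k < n → g k = 0) ∧
        ∑ k ∈ Finset.range n, g k = (g f + g l) / 2 := by
    rcases inv n with h | h
    · exfalso
      rw [Finset.sum_eq_zero (fun k hk => h k (Finset.mem_range.mp hk))] at hsum
      norm_num at hsum
    · exact h
  have hgf : g f = 1 := by
    rw [hsum] at hs
    rcases hval f with h | h | h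
    · exact absurd h hf
    · exact h
    · exfalso
      rcases hval l with h' | h' | h' <;> rw [h] at hs <;> first
        | exact absurd h' hl
        | (rw [h'] at hs; norm_num at hs)
  intro m
  rcases inv m with h | ⟨f', l', hfl', hlm', hf', hl', hbf', haf', hs'⟩
  · left; exact Finset.sum_eq_zero (fun k hk => h k (Finset.mem_range.mp hk))
  · have hff : f' = f := by
      rcases lt_trichotomy f' f with h' | h' | h'
      · exact absurd (hbf f' h') hf'
      · exact h'
      · exact absurd (hbf' f h') hf
    rw [hs', hff, hgf]
    rcases hval l' with h' | h' | h'
    · exact absurd h' hl'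
    · right; rw [h']; norm_num
    · left; rw [h']; norm_num

/-- Sums over initial segments of `Fin n` agree with sums over `range` of the
extension-by-zero. -/
lemma fin_prefix_eq {n : ℕ} (v : Fin n → ℝ) (m : ℕ) :
    ∑ k ∈ Finset.univ.filter (fun k : Fin n => (k : ℕ) < m), v k
      = ∑ k ∈ Finset.range m, (fun k => if h : k < n then v ⟨k, h⟩ else 0) k := by
  set g : ℕ → ℝ := fun k => if h : k < n then v ⟨k, h⟩ else 0 with hg
  have h1 : ∑ k ∈ Finset.univ.filter (fun k : Fin n => (k : ℕ) < m), v k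
      = ∑ k ∈ Finset.range n, (if k < m then g k else 0) := by
    rw [Finset.sum_filter, ← Fin.sum_univ_eq_sum_range]
    refine Finset.sum_congr rfl fun k _ => ?_
    simp [hg, k.isLt]
  have h2 : ∑ k ∈ Finset.range m, g k
      = ∑ k ∈ Finset.range m, (if k < m then g k else 0) := by
    refine Finset.sum_congr rfl fun k hk => ?_
    rw [if_pos (Finset.mem_range.mp hk)]
  rw [h1, h2]
  have h3 : ∑ k ∈ Finset.range n, (if k < m then g k else 0)
      = ∑ k ∈ Finset.range (max m n), (if k < m then g k else 0) := by
    refine Finset.sum_subset (Finset.range_subset_range.mpr (le_max_right m n)) ?_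
    intro k _ hk
    have : ¬ k < n := fun h => hk (Finset.mem_range.mpr h)
    simp [hg, this]
  have h4 : ∑ k ∈ Finset.range m, (if k < m then g k else 0)
      = ∑ k ∈ Finset.range (max m n), (if k < m then g k else 0) := by
    refine Finset.sum_subset (Finset.range_subset_range.mpr (le_max_left m n)) ?_
    intro k _ hk
    have : ¬ k < m := fun h => hk (Finset.mem_range.mpr h)
    simp [this]
  rw [h3, ← h4]

/-- For a `{0,±1}`-valued alternating vector with total sum `1`, all downward
and upward partial sums are `0` or `1`. -/
lemma vec_PS_mem {n : ℕ} (v : Fin n → ℝ)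
    (hval : ∀ k, v k = 0 ∨ v k = 1 ∨ v k = -1)
    (halt : AlternatesSign v) (hsum : ∑ k, v k = 1) (i : Fin n) :
    (∑ k ∈ Finset.Iic i, v k = 0 ∨ ∑ k ∈ Finset.Iic i, v k = 1) ∧
    (∑ k ∈ Finset.Ici i, v k = 0 ∨ ∑ k ∈ Finset.Ici i, v k = 1) := by
  set g : ℕ → ℝ := fun k => if h : k < n then v ⟨k, h⟩ else 0 with hg
  have hval' : ∀ k, g k = 0 ∨ g k = 1 ∨ g k = -1 := by
    intro k
    by_cases h : k < n
    · simpa [hg, h] using hval ⟨k, h⟩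
    · left; simp [hg, h]
  have hnz : ∀ k, g k ≠ 0 → k < n := by
    intro k hk
    by_contra h
    exact hk (by simp [hg, h])
  have halt' : ∀ j₁ j₂, j₁ < j₂ → g j₁ ≠ 0 → g j₂ ≠ 0 →
      (∀ k, j₁ < k → k < j₂ → g k = 0) → g j₂ = -g j₁ := by
    intro j₁ j₂ hlt h1 h2 hz
    have hn1 := hnz _ h1
    have hn2 := hnz _ h2
    have := halt ⟨j₁, hn1⟩ ⟨j₂, hn2⟩ hlt (by simpa [hg, hn1] using h1)
      (by simpa [hg, hn2] using h2)
      (fun k hk1 hk2 => by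
        have := hz k.1 hk1 hk2
        simpa [hg, k.isLt] using this)
    simpa [hg, hn1, hn2] using this
  have hsum' : ∑ k ∈ Finset.range n, g k = 1 := by
    rw [← Fin.sum_univ_eq_sum_range]
    rw [← hsum]
    exact Finset.sum_congr rfl fun k _ => by simp [hg, k.isLt]
  have key := alt_prefix_mem n g hval' halt' hsum'
  have hIic : Finset.Iic i = Finset.univ.filter (fun k : Fin n => (k : ℕ) < i.1 + 1) := by
    ext k
    simp only [Finset.mem_Iic, Finset.mem_filter, Finset.mem_univ, true_and, Fin.le_def]
    omega
  have hIio : Finset.univ.filter (fun k : Fin n => (k : ℕ) < i.1)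
      = Finset.univ.filter (fun k : Fin n => ¬ i ≤ k) := by
    ext k
    simp only [Finset.mem_filter, Finset.mem_univ, true_and, Fin.le_def, not_le, Fin.lt_def]
  constructor
  · rw [hIic, fin_prefix_eq]
    exact key (i.1 + 1)
  · have hsplit := Finset.sum_filter_add_sum_filter_not Finset.univ
      (fun k : Fin n => ¬ i ≤ k) v
    have hIci : Finset.univ.filter (fun k : Fin n => ¬¬ i ≤ k) = Finset.Ici i := by
      ext k; simp
    rw [hIci] at hsplit
    have hval2 : ∑ k ∈ Finset.univ.filter (fun k : Fin n => ¬ i ≤ k), v k = 0 ∨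
        ∑ k ∈ Finset.univ.filter (fun k : Fin n => ¬ i ≤ k), v k = 1 := by
      rw [← hIio, fin_prefix_eq]
      exact key i.1
    have htot : ∑ k ∈ Finset.univ, v k = 1 := hsum
    rcases hval2 with h | h <;> [right; left] <;> linarith

/-- Every directional partial sum of an ASM is `0` or `1`. -/
lemma dirPS_mem {n : ℕ} (X : Matrix (Fin n) (Fin n) ℝ) (hX : IsASM n X)
    (i j : Fin n) (d : Fin 4) : dirPS X i j d = 0 ∨ dirPS X i j d = 1 := by
  obtain ⟨hval, hrow, hcol, haltr, haltc⟩ := hX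
  have hc := vec_PS_mem (fun i' => X i' j) (fun k => hval k j) (haltc j) (hcol j) i
  have hr := vec_PS_mem (fun j' => X i j') (fun k => hval i k) (haltr i) (hrow i) j
  have e0 : dirPS X i j 0 = ∑ i' ∈ Finset.Iic i, X i' j := rfl
  have e1 : dirPS X i j 1 = ∑ i' ∈ Finset.Ici i, X i' j := rfl
  have e2 : dirPS X i j 2 = ∑ j' ∈ Finset.Iic j, X i j' := rfl
  have e3 : dirPS X i j 3 = ∑ j' ∈ Finset.Ici j, X i j' := rfl
  have hd : d = 0 ∨ d = 1 ∨ d = 2 ∨ d = 3 := by omega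
  rcases hd with h | h | h | h <;> subst h
  · rw [e0]; exact hc.1
  · rw [e1]; exact hc.2
  · rw [e2]; exact hr.1
  · rw [e3]; exact hr.2

lemma pair_sum {n : ℕ} (f : Fin n → ℝ) (i : Fin n) :
    ∑ k ∈ Finset.Iic i, f k + ∑ k ∈ Finset.Ici i, f k = (∑ k, f k) + f i := by
  have h1 : ∑ k ∈ Finset.Ici i, f k = f i + ∑ k ∈ Finset.Ioi i, f k := by
    rw [← Finset.Ioi_insert, Finset.sum_insert (by simp)]
  have h2 : ∑ k ∈ Finset.Iic i, f k + ∑ k ∈ Finset.Ioi i, f k = ∑ k, f k := by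
    have := Finset.sum_filter_add_sum_filter_not Finset.univ (fun k : Fin n => k ≤ i) f
    have e1 : Finset.univ.filter (fun k : Fin n => k ≤ i) = Finset.Iic i := by
      ext k; simp
    have e2 : Finset.univ.filter (fun k : Fin n => ¬ k ≤ i) = Finset.Ioi i := by
      ext k; simp [not_le]
    rwa [e1, e2] at this
  rw [h1]; linarith

/-- The sum of all directional partial sums of a matrix with row and column
sums `1` is `2n(n+1)`. -/
lemma total_dirPS_sum {n : ℕ} (X : Matrix (Fin n) (Fin n) ℝ)
    (hrow : ∀ i, ∑ j, X i j = 1) (hcol : ∀ j, ∑ i, X i j = 1) :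
    ∑ p : Fin n × Fin n × Fin 4, dirPS X p.1 p.2.1 p.2.2
      = 2 * (n : ℝ) * ((n : ℝ) + 1) := by
  rw [Fintype.sum_prod_type]
  have hinner : ∀ i j : Fin n, ∑ d : Fin 4, dirPS X i j d = 2 + 2 * X i j := by
    intro i j
    rw [Fin.sum_univ_four]
    have c := pair_sum (fun i' => X i' j) i
    have r := pair_sum (fun j' => X i j') j
    have e0 : dirPS X i j 0 = ∑ i' ∈ Finset.Iic i, X i' j := rfl
    have e1 : dirPS X i j 1 = ∑ i' ∈ Finset.Ici i, X i' j := rfl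
    have e2 : dirPS X i j 2 = ∑ j' ∈ Finset.Iic j, X i j' := rfl
    have e3 : dirPS X i j 3 = ∑ j' ∈ Finset.Ici j, X i j' := rfl
    rw [e0, e1, e2, e3]
    rw [hcol j] at c
    rw [hrow i] at r
    linarith
  calc ∑ i : Fin n, ∑ q : Fin n × Fin 4, dirPS X i q.1 q.2
      = ∑ i : Fin n, ∑ j : Fin n, (2 + 2 * X i j) := by
        refine Finset.sum_congr rfl fun i _ => ?_
        rw [Fintype.sum_prod_type]
        exact Finset.sum_congr rfl fun j _ => hinner i j
    _ = ∑ i : Fin n, (2 * (n:ℝ) + 2) := by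
        refine Finset.sum_congr rfl fun i _ => ?_
        rw [Finset.sum_add_distrib, ← Finset.mul_sum, hrow i]
        simp [mul_comm]
    _ = 2 * (n : ℝ) * ((n : ℝ) + 1) := by
        rw [Finset.sum_const]
        simp
        ring

open scoped Classical in
/-- For distinct alternating sign matrices `A ≠ B`, summing the directional
partial sums of `B` over all (position, direction) pairs where the directional
partial sum of `A` equals `1` gives a value strictly less than `2n(n+1)`;
at `A` itself this linear functional takes the value `2n(n+1)`. -/
theorem dirPS_functional_separates (n : ℕ) (A B : Matrix (Fin n) (Fin n) ℝ)
    (hA : IsASM n A) (hB : IsASM n B) (hAB : A ≠ B) :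
    (∑ p ∈ Finset.univ.filter
        (fun p : Fin n × Fin n × Fin 4 => dirPS A p.1 p.2.1 p.2.2 = 1),
        dirPS B p.1 p.2.1 p.2.2) < 2 * n * (n + 1) ∧
    (∑ p ∈ Finset.univ.filter
        (fun p : Fin n × Fin n × Fin 4 => dirPS A p.1 p.2.1 p.2.2 = 1),
        dirPS A p.1 p.2.1 p.2.2) = 2 * n * (n + 1) := by
  have hApm : ∀ p : Fin n × Fin n × Fin 4,
      dirPS A p.1 p.2.1 p.2.2 = 0 ∨ dirPS A p.1 p.2.1 p.2.2 = 1 :=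
    fun p => dirPS_mem A hA p.1 p.2.1 p.2.2
  have hBpm : ∀ p : Fin n × Fin n × Fin 4,
      dirPS B p.1 p.2.1 p.2.2 = 0 ∨ dirPS B p.1 p.2.1 p.2.2 = 1 :=
    fun p => dirPS_mem B hB p.1 p.2.1 p.2.2
  have htotA := total_dirPS_sum A hA.2.1 hA.2.2.1
  have htotB := total_dirPS_sum B hB.2.1 hB.2.2.1
  have hFA : ∑ p ∈ Finset.univ.filter
      (fun p : Fin n × Fin n × Fin 4 => dirPS A p.1 p.2.1 p.2.2 = 1),
      dirPS A p.1 p.2.1 p.2.2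
      = ∑ p : Fin n × Fin n × Fin 4, dirPS A p.1 p.2.1 p.2.2 :=
    Finset.sum_filter_of_ne (fun p _ h => (hApm p).resolve_left h)
  have hsecond : ∑ p ∈ Finset.univ.filter
      (fun p : Fin n × Fin n × Fin 4 => dirPS A p.1 p.2.1 p.2.2 = 1),
      dirPS A p.1 p.2.1 p.2.2 = 2 * (n:ℝ) * ((n:ℝ) + 1) := by
    rw [hFA, htotA]
  refine ⟨?_, by push_cast; linarith⟩
  by_contra hcon
  push_neg at hcon
  have hcast : (2 * (n:ℝ) * ((n:ℝ) + 1)) ≤ ∑ p ∈ Finset.univ.filter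
      (fun p : Fin n × Fin n × Fin 4 => dirPS A p.1 p.2.1 p.2.2 = 1),
      dirPS B p.1 p.2.1 p.2.2 := by push_cast at hcon; linarith
  set F := Finset.univ.filter
      (fun p : Fin n × Fin n × Fin 4 => dirPS A p.1 p.2.1 p.2.2 = 1) with hFdef
  have hBnonneg : ∀ p : Fin n × Fin n × Fin 4, 0 ≤ dirPS B p.1 p.2.1 p.2.2 := by
    intro p; rcases hBpm p with h | h <;> rw [h] <;> norm_num
  have hsub : ∑ p ∈ F, dirPS B p.1 p.2.1 p.2.2
      ≤ ∑ p : Fin n × Fin n × Fin 4, dirPS B p.1 p.2.1 p.2.2 :=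
    Finset.sum_le_sum_of_subset_of_nonneg (Finset.filter_subset _ _)
      (fun p _ _ => hBnonneg p)
  have heq : ∑ p ∈ F, dirPS B p.1 p.2.1 p.2.2
      = ∑ p : Fin n × Fin n × Fin 4, dirPS B p.1 p.2.1 p.2.2 := by
    rw [htotB]; linarith
  -- B vanishes outside F
  have hcompl : ∀ p ∈ Finset.univ \ F, dirPS B p.1 p.2.1 p.2.2 = 0 := by
    have hzero : ∑ p ∈ Finset.univ \ F, dirPS B p.1 p.2.1 p.2.2 = 0 := by
      rw [Finset.sum_sdiff_eq_sub (Finset.filter_subset _ _), heq, sub_self]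
    intro p hp
    exact (Finset.sum_eq_zero_iff_of_nonneg (fun q _ => hBnonneg q)).mp hzero p hp
  -- B equals 1 on F
  have hcardF : ∑ p ∈ F, (1:ℝ) = 2 * (n:ℝ) * ((n:ℝ) + 1) := by
    have h1 : ∑ p ∈ F, dirPS A p.1 p.2.1 p.2.2 = ∑ p ∈ F, (1:ℝ) :=
      Finset.sum_congr rfl (fun p hp => (Finset.mem_filter.mp hp).2)
    rw [← h1]; exact hsecond
  have honeF : ∀ p ∈ F, dirPS B p.1 p.2.1 p.2.2 = 1 := by
    have hz : ∑ p ∈ F, ((1:ℝ) - dirPS B p.1 p.2.1 p.2.2) = 0 := by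
      rw [Finset.sum_sub_distrib, hcardF, heq, htotB, sub_self]
    have hnn : ∀ p ∈ F, 0 ≤ (1:ℝ) - dirPS B p.1 p.2.1 p.2.2 := by
      intro p _; rcases hBpm p with h | h <;> rw [h] <;> norm_num
    intro p hp
    have := (Finset.sum_eq_zero_iff_of_nonneg hnn).mp hz p hp
    linarith
  -- hence all directional partial sums agree
  have hall : ∀ p : Fin n × Fin n × Fin 4,
      dirPS A p.1 p.2.1 p.2.2 = dirPS B p.1 p.2.1 p.2.2 := by
    intro p
    by_cases hp : p ∈ F
    · rw [(Finset.mem_filter.mp hp).2, honeF p hp]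
    · have h1 : dirPS A p.1 p.2.1 p.2.2 = 0 := by
        rcases hApm p with h | h
        · exact h
        · exact absurd (Finset.mem_filter.mpr ⟨Finset.mem_univ p, h⟩) hp
      have h2 : dirPS B p.1 p.2.1 p.2.2 = 0 :=
        hcompl p (Finset.mem_sdiff.mpr ⟨Finset.mem_univ _, hp⟩)
      rw [h1, h2]
  -- partial column sums agree, so A = B
  have hPS0 : ∀ i j : Fin n, ∑ k ∈ Finset.Iic i, A k j = ∑ k ∈ Finset.Iic i, B k j := by
    intro i j
    have := hall (i, j, 0)
    simpa [dirPS] using this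
  apply hAB
  ext i j
  have key : ∀ m : ℕ, ∀ i : Fin n, i.1 = m → A i j = B i j := by
    intro m
    induction m using Nat.strong_induction_on with
    | _ m ih =>
      intro i hi
      have h1 : ∑ k ∈ Finset.Iic i, (A k j - B k j) = 0 := by
        rw [Finset.sum_sub_distrib, hPS0 i j, sub_self]
      rw [← Finset.Iio_insert, Finset.sum_insert (by simp)] at h1
      have h2 : ∑ k ∈ Finset.Iio i, (A k j - B k j) = 0 := by
        refine Finset.sum_eq_zero (fun k hk => ?_)
        have hk' : k < i := Finset.mem_Iio.mp hk
        have : A k j = B k j := ih k.1 (by rw [← hi]; exact hk') k rfl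
        rw [this, sub_self]
      rw [h2, add_zero] at h1
      linarith
  exact key i.1 i rfl
end
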